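/- arXiv:1405.6978 — 12 statements merged into one kernel-verified Lean document; each statement's English description precedes it below -/
import Mathlib

section
/- For generalized barycentric coordinates {λ_i} on a convex polytope m in R^n and any n×n matrix A, the identity Σ_{i,j} (A v_i · v_j) λ_i ∇λ_j = A x holds pointwise, where x is the position vector. Consequently the span of the functions λ_i ∇λ_j contains all vector fields with affine (degree ≤ 1 polynomial) components. -/
open Matrix BigOperators

/-- For generalized barycentric coordinates `{λ_i}` on a convex polytope `m ⊆ ℝⁿ` and any
`n×n` matrix `A`, the identity `Σ_{i,j} (A v_i · v_j) λ_i ∇λ_j = A x` holds pointwise on `m`.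
Consequently the span of the functions `λ_i ∇λ_j` contains every vector field with affine
(degree ≤ 1 polynomial) components `A x + b`. -/
theorem gbc_lnl_reproduces_linear_fields
    {n N : ℕ} (m : Set (Fin n → ℝ)) (hm : Convex ℝ m)
    (v : Fin N → (Fin n → ℝ))
    (lam : Fin N → (Fin n → ℝ) → ℝ) (g : Fin N → (Fin n → ℝ) → (Fin n → ℝ))
    (hsum : ∀ x ∈ m, ∑ i, lam i x = 1)
    (hlin : ∀ x ∈ m, ∑ i, lam i x • v i = x)
    (hgsum : ∀ x ∈ m, ∑ i, g i x = 0)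
    (hgI : ∀ x ∈ m, ∑ i, Matrix.vecMulVec (v i) (g i x)
      = (1 : Matrix (Fin n) (Fin n) ℝ)) :
    (∀ A : Matrix (Fin n) (Fin n) ℝ, ∀ x ∈ m,
      ∑ i, ∑ j, (A.mulVec (v i) ⬝ᵥ v j) • (lam i x • g j x) = A.mulVec x) ∧
    (∀ A : Matrix (Fin n) (Fin n) ℝ, ∀ b : Fin n → ℝ,
      ∃ c : Fin N → Fin N → ℝ, ∀ x ∈ m,
        ∑ i, ∑ j, c i j • (lam i x • g j x) = A.mulVec x + b) := by
  -- key lemma: ∑_j (w ⬝ᵥ v j) • g j x = w for x ∈ m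
  have key : ∀ (w : Fin n → ℝ), ∀ x ∈ m, ∑ j, (w ⬝ᵥ v j) • g j x = w := by
    intro w x hx
    have h1 : ∑ j, (w ⬝ᵥ v j) • g j x
        = Matrix.vecMul w (∑ j, Matrix.vecMulVec (v j) (g j x)) := by
      funext k
      simp only [Finset.sum_apply, Pi.smul_apply, smul_eq_mul, Matrix.vecMul,
        Matrix.vecMulVec_apply, dotProduct, Finset.sum_apply, Matrix.sum_apply]
      simp_rw [Finset.sum_mul, Finset.mul_sum]
      rw [Finset.sum_comm]
      simp_rw [mul_assoc]
    rw [h1, hgI x hx, Matrix.vecMul_one]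
  have main : ∀ A : Matrix (Fin n) (Fin n) ℝ, ∀ x ∈ m,
      ∑ i, ∑ j, (A.mulVec (v i) ⬝ᵥ v j) • (lam i x • g j x) = A.mulVec x := by
    intro A x hx
    have : ∀ i, ∑ j, (A.mulVec (v i) ⬝ᵥ v j) • (lam i x • g j x)
        = lam i x • A.mulVec (v i) := by
      intro i
      calc ∑ j, (A.mulVec (v i) ⬝ᵥ v j) • (lam i x • g j x)
          = lam i x • ∑ j, (A.mulVec (v i) ⬝ᵥ v j) • g j x := by
            rw [Finset.smul_sum]
            exact Finset.sum_congr rfl fun j _ => (smul_comm _ _ _)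
        _ = lam i x • A.mulVec (v i) := by rw [key _ x hx]
    simp only [this]
    have : ∑ i, lam i x • A.mulVec (v i) = A.mulVec (∑ i, lam i x • v i) := by
      simp only [← Matrix.mulVecLin_apply]
      rw [map_sum]
      simp only [_root_.map_smul]
    rw [this, hlin x hx]
  refine ⟨main, ?_⟩
  intro A b
  refine ⟨fun i j => A.mulVec (v i) ⬝ᵥ v j + b ⬝ᵥ v j, fun x hx => ?_⟩
  have hb : ∑ i, ∑ j, (b ⬝ᵥ v j) • (lam i x • g j x) = b := by
    have : ∀ i, ∑ j, (b ⬝ᵥ v j) • (lam i x • g j x) = lam i x • b := by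
      intro i
      calc ∑ j, (b ⬝ᵥ v j) • (lam i x • g j x)
          = lam i x • ∑ j, (b ⬝ᵥ v j) • g j x := by
            rw [Finset.smul_sum]; exact Finset.sum_congr rfl fun j _ => (smul_comm _ _ _)
        _ = lam i x • b := by rw [key b x hx]
    simp only [this, ← Finset.sum_smul, hsum x hx, one_smul]
  calc ∑ i, ∑ j, (A.mulVec (v i) ⬝ᵥ v j + b ⬝ᵥ v j) • (lam i x • g j x)
      = (∑ i, ∑ j, (A.mulVec (v i) ⬝ᵥ v j) • (lam i x • g j x))
        + ∑ i, ∑ j, (b ⬝ᵥ v j) • (lam i x • g j x) := by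
        rw [← Finset.sum_add_distrib]
        refine Finset.sum_congr rfl fun i _ => ?_
        rw [← Finset.sum_add_distrib]
        exact Finset.sum_congr rfl fun j _ => add_smul _ _ _
    _ = A.mulVec x + b := by rw [main A x hx, hb]
end

section
/- For generalized barycentric coordinates {λ_i} on a convex polygon m in R^2, the identity Σ_{i,j} (rot λ_i ∇λ_j)(rot(v_j − v_i))^T = I holds, where rot denotes counterclockwise rotation by 90 degrees, i.e., rot(a,b) = (−b, a), and I is the 2×2 identity matrix. -/
open Matrix BigOperators

/-- Counterclockwise rotation by 90 degrees in `ℝ²`: `rot (a, b) = (−b, a)`. -/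
noncomputable def rot (w : Fin 2 → ℝ) : Fin 2 → ℝ := ![-w 1, w 0]

lemma double_sum_split {N : ℕ} (p q c d : Fin N → ℝ) :
    ∑ i, ∑ j, p i * q j * (c j - d i)
      = (∑ i, p i) * (∑ j, q j * c j) - (∑ j, q j) * (∑ i, p i * d i) := by
  have h : ∀ i, ∑ j, p i * q j * (c j - d i)
      = p i * (∑ j, q j * c j) - (∑ j, q j) * (p i * d i) := by
    intro i
    rw [Finset.mul_sum, Finset.sum_mul, ← Finset.sum_sub_distrib]
    exact Finset.sum_congr rfl fun j _ => by ring
  simp only [h]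
  rw [Finset.sum_sub_distrib, ← Finset.sum_mul, ← Finset.mul_sum]

/-- For generalized barycentric coordinates `{λ_i}` on a convex polygon `m ⊆ ℝ²`
(values and gradients at a point, satisfying the four barycentric identities),
`Σ_{i,j} (rot λ_i ∇λ_j)(rot(v_j − v_i))ᵀ = I`. -/
theorem gbc_rot_lnl_reproduces_identity
    {N : ℕ} (v : Fin N → (Fin 2 → ℝ)) (x : Fin 2 → ℝ)
    (l : Fin N → ℝ) (g : Fin N → (Fin 2 → ℝ))
    (hsum : ∑ i, l i = 1)
    (hlin : ∑ i, l i • v i = x)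
    (hgsum : ∑ i, g i = 0)
    (hgI : ∑ i, Matrix.vecMulVec (v i) (g i) = (1 : Matrix (Fin 2) (Fin 2) ℝ)) :
    ∑ i, ∑ j, Matrix.vecMulVec (rot (l i • g j)) (rot (v j - v i))
      = (1 : Matrix (Fin 2) (Fin 2) ℝ) := by
  have hg0 : ∀ b : Fin 2, ∑ i, g i b = 0 := fun b => by
    have := congrFun hgsum b
    simpa [Finset.sum_apply] using this
  have hl : ∀ b : Fin 2, ∑ i, l i * v i b = x b := fun b => by
    have := congrFun hlin b
    simpa [Finset.sum_apply] using this
  have hI : ∀ a b : Fin 2, ∑ i, v i a * g i b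
      = (1 : Matrix (Fin 2) (Fin 2) ℝ) a b := fun a b => by
    have := congrFun (congrFun hgI a) b
    simpa [Matrix.sum_apply, Matrix.vecMulVec_apply] using this
  have hIs : ∀ a b : Fin 2, ∑ i, g i a * v i b
      = (1 : Matrix (Fin 2) (Fin 2) ℝ) a b := fun a b => by
    have h1 : (1 : Matrix (Fin 2) (Fin 2) ℝ) a b = (1 : Matrix (Fin 2) (Fin 2) ℝ) b a := by
      simp [Matrix.one_apply, eq_comm]
    rw [h1, ← hI b a]
    exact Finset.sum_congr rfl fun i _ => by ring
  ext a b
  rw [Matrix.sum_apply]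
  simp only [Matrix.sum_apply, Matrix.vecMulVec_apply]
  have step : ∀ (q c d : Fin N → ℝ),
      ∑ i, ∑ j, l i * q j * (c j - d i)
        = (∑ i, l i) * (∑ j, q j * c j) - (∑ j, q j) * (∑ i, l i * d i) :=
    fun q c d => double_sum_split l q c d
  fin_cases a <;> fin_cases b
  · refine Eq.trans (Finset.sum_congr rfl fun i _ => Finset.sum_congr rfl fun j _ => ?_)
      ?_ (b := ∑ i, ∑ j, l i * g j 1 * (v j 1 - v i 1))
    · simp [rot]; try ring
    · rw [step, hsum, hg0, hIs]; simp [Matrix.one_apply]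
  · refine Eq.trans (Finset.sum_congr rfl fun i _ => Finset.sum_congr rfl fun j _ => ?_)
      ?_ (b := ∑ i, ∑ j, l i * (-g j 1) * (v j 0 - v i 0))
    · simp [rot]; try ring
    · rw [step]
      simp [neg_mul, Finset.sum_neg_distrib, hsum, hg0, hIs, Matrix.one_apply]
  · refine Eq.trans (Finset.sum_congr rfl fun i _ => Finset.sum_congr rfl fun j _ => ?_)
      ?_ (b := ∑ i, ∑ j, l i * (-g j 0) * (v j 1 - v i 1))
    · simp [rot]; try ring
    · rw [step]
      simp [neg_mul, Finset.sum_neg_distrib, hsum, hg0, hIs, Matrix.one_apply]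
  · refine Eq.trans (Finset.sum_congr rfl fun i _ => Finset.sum_congr rfl fun j _ => ?_)
      ?_ (b := ∑ i, ∑ j, l i * g j 0 * (v j 0 - v i 0))
    · simp [rot]; try ring
    · rw [step, hsum, hg0, hIs]; simp [Matrix.one_apply]
end

section
/- For generalized barycentric coordinates {λ_i} on a convex polyhedron m in R^3, the identity Σ_{j,k} (∇λ_j × ∇λ_k)(v_j × v_k)^T = 2I holds pointwise, where × is the cross product in R^3 and I is the 3×3 identity matrix. -/
open Matrix BigOperators

/-- For generalized barycentric coordinates `{λ_i}` on a convex polyhedron `m ⊆ ℝ³`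
(gradients `g i = ∇λ_i(x)` at a point, satisfying `Σ_i v_i (∇λ_i)ᵀ = I`), the identity
`Σ_{j,k} (∇λ_j × ∇λ_k)(v_j × v_k)ᵀ = 2I` holds. -/
theorem gbc_cross_gradient_identity
    {N : ℕ} (v : Fin N → (Fin 3 → ℝ)) (g : Fin N → (Fin 3 → ℝ))
    (hgI : ∑ i, Matrix.vecMulVec (v i) (g i) = (1 : Matrix (Fin 3) (Fin 3) ℝ)) :
    ∑ j, ∑ k, Matrix.vecMulVec (crossProduct (g j) (g k)) (crossProduct (v j) (v k))
      = (2 : ℝ) • (1 : Matrix (Fin 3) (Fin 3) ℝ) := by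
  have ht : ∀ a c : Fin 3, (∑ j, g j a * v j c) = if a = c then (1:ℝ) else 0 := by
    intro a c
    have h := congrFun (congrFun hgI c) a
    simp only [Matrix.sum_apply, Matrix.vecMulVec_apply, Matrix.one_apply] at h
    calc (∑ j, g j a * v j c) = ∑ j, v j c * g j a := by
          exact Finset.sum_congr rfl fun j _ => mul_comm _ _
      _ = if c = a then 1 else 0 := h
      _ = if a = c then 1 else 0 := by by_cases hac : a = c <;> simp [hac, Ne.symm, eq_comm]
  have hfac : ∀ a b c d : Fin 3,
      (∑ j, ∑ k, g j a * v j c * (g k b * v k d))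
        = (if a = c then (1:ℝ) else 0) * (if b = d then (1:ℝ) else 0) := by
    intro a b c d
    rw [← ht a c, ← ht b d, Finset.sum_mul_sum]
  have key : ∀ (a b c d : Fin 3),
      (∑ j, ∑ k, (g j a * g k b - g j b * g k a) * (v j c * v k d - v j d * v k c))
        = ((if a = c then (1:ℝ) else 0) * (if b = d then (1:ℝ) else 0)
          - (if a = d then (1:ℝ) else 0) * (if b = c then (1:ℝ) else 0)
          - (if b = c then (1:ℝ) else 0) * (if a = d then (1:ℝ) else 0)
          + (if b = d then (1:ℝ) else 0) * (if a = c then (1:ℝ) else 0)) := by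
    intro a b c d
    have e : ∀ j k : Fin N, (g j a * g k b - g j b * g k a) * (v j c * v k d - v j d * v k c)
        = g j a * v j c * (g k b * v k d) - g j a * v j d * (g k b * v k c)
          - (g j b * v j c * (g k a * v k d)) + g j b * v j d * (g k a * v k c) := by
      intro j k; ring
    simp only [e, Finset.sum_add_distrib, Finset.sum_sub_distrib, hfac]
  ext p q
  simp only [Matrix.sum_apply, Matrix.vecMulVec_apply, Matrix.smul_apply, Matrix.one_apply,
    smul_eq_mul]
  fin_cases p <;> fin_cases q <;>
    (norm_num [crossProduct]; rw [key]; norm_num [Fin.ext_iff])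
end

section
/- For generalized barycentric coordinates {λ_i} on a convex polyhedron m in R^3, the identity (1/2) Σ_{i,j,k} λ_i (∇λ_j × ∇λ_k) ((v_j − v_i) × (v_k − v_i))^T = I holds pointwise, where I is the 3×3 identity matrix. -/
open Matrix BigOperators

/-!
Fix `i` and put `wⱼ = vⱼ - vᵢ`. Since `∑ⱼ ∇λⱼ = 0`, still `∑ⱼ wⱼ ∇λⱼᵀ = I`. For any family with
`∑ⱼ wⱼ gⱼᵀ = A`, every entry of `∑ⱼₖ (gⱼ × gₖ)(wⱼ × wₖ)ᵀ` is, by Cauchy–Binet, twice a `2 × 2` minor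
of `A`, so this double sum is `2 adj A`. With `A = I` the inner double sum is `2 I` for every `i`,
and the weights `λᵢ` sum to `1`.
-/

theorem Finset.sum_sum_add_swap {ι M : Type*} [Fintype ι] [AddCommMonoid M] (f : ι → ι → M) :
    ∑ j, ∑ k, (f j k + f k j) = 2 • ∑ j, ∑ k, f j k := by
  rw [two_nsmul]
  simp only [Finset.sum_add_distrib]
  congr 1
  exact Finset.sum_comm

section CrossProduct

variable {R : Type*} [CommRing R]

theorem cross_apply_eq_cyclic (u w : Fin 3 → R) (a : Fin 3) :
    (u ⨯₃ w) a = u (a + 1) * w (a + 2) - u (a + 2) * w (a + 1) := by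
  fin_cases a <;> simp [cross_apply]

theorem adjugate_fin_three_apply_cyclic (A : Matrix (Fin 3) (Fin 3) R) (a b : Fin 3) :
    adjugate A a b =
      A (b + 1) (a + 1) * A (b + 2) (a + 2) - A (b + 2) (a + 1) * A (b + 1) (a + 2) := by
  fin_cases a <;> fin_cases b <;> simp [adjugate_fin_three] <;> ring

theorem sum_vecMulVec_cross_cross {ι : Type*} [Fintype ι] (w g : ι → Fin 3 → R) :
    ∑ j, ∑ k, vecMulVec (g j ⨯₃ g k) (w j ⨯₃ w k)
      = 2 • adjugate (∑ j, vecMulVec (w j) (g j)) := by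
  ext a b
  simp only [Matrix.sum_apply, vecMulVec_apply, Matrix.smul_apply, cross_apply_eq_cyclic,
    adjugate_fin_three_apply_cyclic, Finset.sum_mul_sum, ← Finset.sum_sub_distrib]
  rw [← Finset.sum_sum_add_swap]
  refine Finset.sum_congr rfl fun j _ => Finset.sum_congr rfl fun k _ => ?_
  ring

end CrossProduct

theorem sum_vecMulVec_sub_const_of_sum_eq_zero {ι m n R : Type*} [Fintype ι] [CommRing R] (w : ι → m → R)
    (c : m → R) (g : ι → n → R) (hg : ∑ j, g j = 0) :
    ∑ j, vecMulVec (w j - c) (g j) = ∑ j, vecMulVec (w j) (g j) := by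
  simp only [sub_vecMulVec, Finset.sum_sub_distrib, sub_eq_self]
  ext a b
  simp [Matrix.sum_apply, vecMulVec_apply, ← Finset.mul_sum, ← Finset.sum_apply, hg]

theorem gbc_lnlxnl_reproduces_identity_general
    {N : ℕ} (v : Fin N → (Fin 3 → ℝ))
    (l : Fin N → ℝ) (g : Fin N → (Fin 3 → ℝ))
    (hsum : ∑ i, l i = 1)
    (hgsum : ∑ i, g i = 0)
    (hgI : ∑ i, Matrix.vecMulVec (v i) (g i) = (1 : Matrix (Fin 3) (Fin 3) ℝ)) :
    (1 / 2 : ℝ) • ∑ i, ∑ j, ∑ k,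
        Matrix.vecMulVec (l i • crossProduct (g j) (g k))
          (crossProduct (v j - v i) (v k - v i))
      = (1 : Matrix (Fin 3) (Fin 3) ℝ) := by
  calc (1 / 2 : ℝ) • ∑ i, ∑ j, ∑ k,
        vecMulVec (l i • g j ⨯₃ g k) ((v j - v i) ⨯₃ (v k - v i))
      = (1 / 2 : ℝ) • ∑ i, l i • 2 • adjugate (∑ j, vecMulVec (v j - v i) (g j)) := by
        simp only [smul_vecMulVec, ← Finset.smul_sum, sum_vecMulVec_cross_cross]
    _ = (1 / 2 : ℝ) • ∑ i, l i • 2 • (1 : Matrix (Fin 3) (Fin 3) ℝ) := by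
        simp only [sum_vecMulVec_sub_const_of_sum_eq_zero _ _ _ hgsum, hgI, adjugate_one]
    _ = 1 := by
        rw [← Finset.sum_smul, hsum, one_smul, two_nsmul, ← two_smul ℝ, smul_smul]
        norm_num

/-- For generalized barycentric coordinates `{λ_i}` on a convex polyhedron `m ⊆ ℝ³`
(values `l i = λ_i(x)` and gradients `g i = ∇λ_i(x)` at a point, satisfying the four
barycentric identities), the identity
`(1/2) Σ_{i,j,k} λ_i (∇λ_j × ∇λ_k) ((v_j − v_i) × (v_k − v_i))ᵀ = I` holds. -/
theorem gbc_lnlxnl_reproduces_identity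
    {N : ℕ} (v : Fin N → (Fin 3 → ℝ)) (x : Fin 3 → ℝ)
    (l : Fin N → ℝ) (g : Fin N → (Fin 3 → ℝ))
    (hnonneg : ∀ i, 0 ≤ l i)
    (hsum : ∑ i, l i = 1)
    (hlin : ∑ i, l i • v i = x)
    (hgsum : ∑ i, g i = 0)
    (hgI : ∑ i, Matrix.vecMulVec (v i) (g i) = (1 : Matrix (Fin 3) (Fin 3) ℝ)) :
    (1 / 2 : ℝ) • ∑ i, ∑ j, ∑ k,
        Matrix.vecMulVec (l i • crossProduct (g j) (g k))
          (crossProduct (v j - v i) (v k - v i))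
      = (1 : Matrix (Fin 3) (Fin 3) ℝ) :=
  gbc_lnlxnl_reproduces_identity_general v l g hsum hgsum hgI
end

section
/- For generalized barycentric coordinates {λ_i} on a convex polyhedron m in R^3 and any 3×3 matrix A, the identity (1/2) Σ_{i,j,k} (A v_i · (v_j × v_k)) λ_i (∇λ_j × ∇λ_k) = A x holds pointwise, where x is the position vector. Hence the span of the functions λ_i (∇λ_j × ∇λ_k) contains all vector fields on m with affine components. -/
open Matrix BigOperators

/-- Key algebraic identity: if `∑ j, v j ⊗ w j = I` (entrywise), then for any vector `u`,
`∑ j, ∑ k, (u ⬝ (v j × v k)) • (w j × w k) = 2 • u`. -/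
lemma gbc_key {N : ℕ} (v w : Fin N → (Fin 3 → ℝ))
    (h : ∀ a c : Fin 3, ∑ j, v j a * w j c = if a = c then (1:ℝ) else 0)
    (u : Fin 3 → ℝ) :
    ∑ j, ∑ k, (u ⬝ᵥ (crossProduct (v j) (v k) : Fin 3 → ℝ)) •
        (crossProduct (w j) (w k) : Fin 3 → ℝ) = (2:ℝ) • u := by
  have hf : ∀ a b c d : Fin 3, ∑ j, ∑ k, (v j a * w j c) * (v k b * w k d)
      = (if a = c then (1:ℝ) else 0) * (if b = d then 1 else 0) := by
    intro a b c d
    rw [← h a c, ← h b d, Finset.sum_mul_sum]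
  have quad : ∀ x y z t : Fin 3,
      ∑ j, ∑ k, (v j x * v k y - v j y * v k x) * (w j z * w k t - w j t * w k z)
      = 2 * ((if x = z then (1:ℝ) else 0) * (if y = t then 1 else 0)
           - (if x = t then (1:ℝ) else 0) * (if y = z then 1 else 0)) := by
    intro x y z t
    have e : ∀ j ∈ Finset.univ, ∑ k, (v j x * v k y - v j y * v k x) *
          (w j z * w k t - w j t * w k z)
        = ∑ k, ((v j x * w j z) * (v k y * w k t) - (v j x * w j t) * (v k y * w k z)
              - (v j y * w j z) * (v k x * w k t) + (v j y * w j t) * (v k x * w k z)) := by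
      intro j _
      exact Finset.sum_congr rfl (fun k _ => by ring)
    rw [Finset.sum_congr rfl e]
    simp only [Finset.sum_add_distrib, Finset.sum_sub_distrib, hf]
    ring
  have step : ∀ a p : Fin 3,
      ∑ j, ∑ k, (crossProduct (v j) (v k) : Fin 3 → ℝ) a *
        (crossProduct (w j) (w k) : Fin 3 → ℝ) p
      = if a = p then (2:ℝ) else 0 := by
    intro a p
    fin_cases a <;> fin_cases p <;>
      simp only [cross_apply, Matrix.cons_val_zero, Matrix.cons_val_one, Matrix.head_cons,
        Matrix.cons_val_two, Matrix.tail_cons, Fin.zero_eta, Fin.mk_one, Fin.reduceFinMk,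
        Fin.isValue] <;>
      rw [quad] <;> simp
  have pull : ∀ (X Y Z W : Fin N → Fin N → ℝ),
      ∑ j, ∑ k, (u 0 * X j k + u 1 * Y j k + u 2 * Z j k) * W j k
      = u 0 * (∑ j, ∑ k, X j k * W j k) + u 1 * (∑ j, ∑ k, Y j k * W j k)
        + u 2 * (∑ j, ∑ k, Z j k * W j k) := by
    intro X Y Z W
    simp only [add_mul, Finset.sum_add_distrib, Finset.mul_sum, mul_assoc]
  funext p
  simp only [Finset.sum_apply, Pi.smul_apply, smul_eq_mul, dotProduct, Fin.sum_univ_three]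
  rw [pull, step 0 p, step 1 p, step 2 p]
  fin_cases p <;> simp <;> ring

/-- Summing the key identity against coefficients `l i` and vectors `u i`. -/
lemma gbc_aux {N : ℕ} (v : Fin N → (Fin 3 → ℝ)) (l : Fin N → ℝ) (w : Fin N → (Fin 3 → ℝ))
    (h : ∀ a c : Fin 3, ∑ j, v j a * w j c = if a = c then (1:ℝ) else 0)
    (u : Fin N → (Fin 3 → ℝ)) :
    ∑ i, ∑ j, ∑ k, (u i ⬝ᵥ (crossProduct (v j) (v k) : Fin 3 → ℝ)) •
        (l i • (crossProduct (w j) (w k) : Fin 3 → ℝ))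
      = (2:ℝ) • ∑ i, l i • u i := by
  rw [Finset.smul_sum]
  refine Finset.sum_congr rfl fun i _ => ?_
  calc ∑ j, ∑ k, (u i ⬝ᵥ (crossProduct (v j) (v k) : Fin 3 → ℝ)) •
        (l i • (crossProduct (w j) (w k) : Fin 3 → ℝ))
      = l i • ∑ j, ∑ k, (u i ⬝ᵥ (crossProduct (v j) (v k) : Fin 3 → ℝ)) •
        (crossProduct (w j) (w k) : Fin 3 → ℝ) := by
        rw [Finset.smul_sum]
        refine Finset.sum_congr rfl fun j _ => ?_
        rw [Finset.smul_sum]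
        exact Finset.sum_congr rfl fun k _ => smul_comm _ _ _
    _ = l i • ((2:ℝ) • u i) := by rw [gbc_key v w h (u i)]
    _ = (2:ℝ) • (l i • u i) := smul_comm _ _ _

/-- For generalized barycentric coordinates `{λ_i}` on a convex polyhedron `m ⊆ ℝ³` and any
`3×3` matrix `A`, `(1/2) Σ_{i,j,k} (A v_i · (v_j × v_k)) λ_i (∇λ_j × ∇λ_k) = A x` holds
pointwise.  Hence the span of the functions `λ_i (∇λ_j × ∇λ_k)` contains all vector fields
on `m` with affine components `A x + b`. -/
theorem gbc_lnlxnl_reproduces_linear_fields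
    {N : ℕ} (m : Set (Fin 3 → ℝ)) (hm : Convex ℝ m)
    (v : Fin N → (Fin 3 → ℝ))
    (lam : Fin N → (Fin 3 → ℝ) → ℝ) (g : Fin N → (Fin 3 → ℝ) → (Fin 3 → ℝ))
    (hsum : ∀ x ∈ m, ∑ i, lam i x = 1)
    (hlin : ∀ x ∈ m, ∑ i, lam i x • v i = x)
    (hgsum : ∀ x ∈ m, ∑ i, g i x = 0)
    (hgI : ∀ x ∈ m, ∑ i, Matrix.vecMulVec (v i) (g i x)
      = (1 : Matrix (Fin 3) (Fin 3) ℝ)) :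
    (∀ A : Matrix (Fin 3) (Fin 3) ℝ, ∀ x ∈ m,
      (1 / 2 : ℝ) • ∑ i, ∑ j, ∑ k,
          (A.mulVec (v i) ⬝ᵥ crossProduct (v j) (v k)) •
            (lam i x • crossProduct (g j x) (g k x))
        = A.mulVec x) ∧
    (∀ A : Matrix (Fin 3) (Fin 3) ℝ, ∀ b : Fin 3 → ℝ,
      ∃ c : Fin N → Fin N → Fin N → ℝ, ∀ x ∈ m,
        ∑ i, ∑ j, ∑ k, c i j k • (lam i x • crossProduct (g j x) (g k x))
          = A.mulVec x + b) := by
  have hD : ∀ x ∈ m, ∀ a c : Fin 3,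
      ∑ i, v i a * g i x c = if a = c then (1:ℝ) else 0 := by
    intro x hx a c
    have := congrFun (congrFun (hgI x hx) a) c
    simpa [Matrix.sum_apply, Matrix.vecMulVec_apply, Matrix.one_apply] using this
  have hAx : ∀ (A : Matrix (Fin 3) (Fin 3) ℝ), ∀ x ∈ m,
      ∑ i, lam i x • A.mulVec (v i) = A.mulVec x := by
    intro A x hx
    conv_rhs => rw [← hlin x hx]
    rw [show A.mulVec = A.mulVecLin from rfl, map_sum]
    simp
  constructor
  · intro A x hx
    rw [gbc_aux v (fun i => lam i x) (fun i => g i x) (hD x hx) (fun i => A.mulVec (v i))]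
    rw [smul_smul]
    norm_num
    exact hAx A x hx
  · intro A b
    refine ⟨fun i j k => (1 / 2 : ℝ) *
      ((A.mulVec (v i) + b) ⬝ᵥ (crossProduct (v j) (v k) : Fin 3 → ℝ)), ?_⟩
    intro x hx
    have e : ∀ i : Fin N, ∀ j k : Fin N,
        ((1 / 2 : ℝ) * ((A.mulVec (v i) + b) ⬝ᵥ (crossProduct (v j) (v k) : Fin 3 → ℝ))) •
          (lam i x • (crossProduct (g j x) (g k x) : Fin 3 → ℝ))
        = (1 / 2 : ℝ) • (((A.mulVec (v i) + b) ⬝ᵥ (crossProduct (v j) (v k) : Fin 3 → ℝ)) •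
          (lam i x • (crossProduct (g j x) (g k x) : Fin 3 → ℝ))) := by
      intro i j k
      simp only [smul_smul, mul_assoc]
    simp only [e, ← Finset.smul_sum]
    rw [gbc_aux v (fun i => lam i x) (fun i => g i x) (hD x hx)
      (fun i => A.mulVec (v i) + b)]
    rw [smul_smul]
    norm_num
    simp only [smul_add, Finset.sum_add_distrib]
    rw [hAx A x hx, ← Finset.sum_smul, hsum x hx, one_smul]
end

section
/- For generalized barycentric coordinates {λ_i} on a convex polygon m in R^2, the scalar identity (1/2) Σ_{i,j,k} λ_i (∇λ_j · rot ∇λ_k) ((v_j − v_i) · rot(v_k − v_i)) = 1 holds pointwise, where rot(a,b) = (−b,a). -/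
open Matrix BigOperators

/-- For generalized barycentric coordinates `{λ_i}` on a convex polygon `m ⊆ ℝ²`
(values and gradients at a point, satisfying the four barycentric identities),
`(1/2) Σ_{i,j,k} λ_i (∇λ_j · rot ∇λ_k) ((v_j − v_i) · rot(v_k − v_i)) = 1`. -/
theorem gbc_lnldrnl_reproduces_one
    {N : ℕ} (v : Fin N → (Fin 2 → ℝ)) (x : Fin 2 → ℝ)
    (l : Fin N → ℝ) (g : Fin N → (Fin 2 → ℝ))
    (hsum : ∑ i, l i = 1)
    (hlin : ∑ i, l i • v i = x)
    (hgsum : ∑ i, g i = 0)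
    (hgI : ∑ i, Matrix.vecMulVec (v i) (g i) = (1 : Matrix (Fin 2) (Fin 2) ℝ)) :
    (1 / 2 : ℝ) * ∑ i, ∑ j, ∑ k,
        l i * (g j ⬝ᵥ rot (g k)) * ((v j - v i) ⬝ᵥ rot (v k - v i)) = 1 := by
  have hg0 : ∑ i, g i 0 = 0 := by
    have := congrFun hgsum 0
    simpa [Finset.sum_apply] using this
  have hg1 : ∑ i, g i 1 = 0 := by
    have := congrFun hgsum 1
    simpa [Finset.sum_apply] using this
  have h00 : ∑ i, v i 0 * g i 0 = 1 := by
    have := congrFun (congrFun hgI 0) 0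
    simpa [Matrix.sum_apply, Matrix.vecMulVec_apply, Matrix.one_apply] using this
  have h01 : ∑ i, v i 0 * g i 1 = 0 := by
    have := congrFun (congrFun hgI 0) 1
    simpa [Matrix.sum_apply, Matrix.vecMulVec_apply, Matrix.one_apply] using this
  have h10 : ∑ i, v i 1 * g i 0 = 0 := by
    have := congrFun (congrFun hgI 1) 0
    simpa [Matrix.sum_apply, Matrix.vecMulVec_apply, Matrix.one_apply] using this
  have h11 : ∑ i, v i 1 * g i 1 = 1 := by
    have := congrFun (congrFun hgI 1) 1
    simpa [Matrix.sum_apply, Matrix.vecMulVec_apply, Matrix.one_apply] using this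
  have hk : ∀ i j, ∑ k, l i * (g j ⬝ᵥ rot (g k)) * ((v j - v i) ⬝ᵥ rot (v k - v i))
      = l i * (g j 0 * (v j 0 - v i 0) + g j 1 * (v j 1 - v i 1)) := by
    intro i j
    have step : ∀ k, l i * (g j ⬝ᵥ rot (g k)) * ((v j - v i) ⬝ᵥ rot (v k - v i))
        = (l i * (g j 1 * (v j 1 - v i 1))) * (v k 0 * g k 0)
        + (-(l i * (g j 1 * (v j 0 - v i 0)))) * (v k 1 * g k 0)
        + (-(l i * (g j 0 * (v j 1 - v i 1)))) * (v k 0 * g k 1)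
        + (l i * (g j 0 * (v j 0 - v i 0))) * (v k 1 * g k 1)
        + (l i * (g j 1 * (-(v j 1 - v i 1) * v i 0 + (v j 0 - v i 0) * v i 1))) * g k 0
        + (-(l i * (g j 0 * (-(v j 1 - v i 1) * v i 0 + (v j 0 - v i 0) * v i 1)))) * g k 1 := by
      intro k
      simp [rot, dotProduct, Fin.sum_univ_two]
      ring
    rw [Finset.sum_congr rfl fun k _ => step k]
    simp only [Finset.sum_add_distrib, ← Finset.mul_sum]
    rw [h00, h01, h10, h11, hg0, hg1]
    ring
  have hj : ∀ i, ∑ j, l i * (g j 0 * (v j 0 - v i 0) + g j 1 * (v j 1 - v i 1))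
      = 2 * l i := by
    intro i
    have step : ∀ j, l i * (g j 0 * (v j 0 - v i 0) + g j 1 * (v j 1 - v i 1))
        = l i * (v j 0 * g j 0) + l i * (v j 1 * g j 1)
        + (-(l i * v i 0)) * g j 0 + (-(l i * v i 1)) * g j 1 := by
      intro j; ring
    rw [Finset.sum_congr rfl fun j _ => step j]
    simp only [Finset.sum_add_distrib, ← Finset.mul_sum]
    rw [h00, h11, hg0, hg1]
    ring
  have : ∑ i, ∑ j, ∑ k,
      l i * (g j ⬝ᵥ rot (g k)) * ((v j - v i) ⬝ᵥ rot (v k - v i)) = 2 := by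
    calc ∑ i, ∑ j, ∑ k, l i * (g j ⬝ᵥ rot (g k)) * ((v j - v i) ⬝ᵥ rot (v k - v i))
        = ∑ i, ∑ j, l i * (g j 0 * (v j 0 - v i 0) + g j 1 * (v j 1 - v i 1)) := by
          exact Finset.sum_congr rfl fun i _ => Finset.sum_congr rfl fun j _ => hk i j
      _ = ∑ i, 2 * l i := Finset.sum_congr rfl fun i _ => hj i
      _ = 2 := by rw [← Finset.mul_sum, hsum, mul_one]
  rw [this]; norm_num
end

section
/- For generalized barycentric coordinates {λ_i} on a convex polygon m in R^2 and any vector a in R^2, the identity (1/2) Σ_{i,j,k} (a·v_i)(v_j · rot v_k) λ_i (∇λ_j · rot ∇λ_k) = a · x holds pointwise; hence the span of the scalar functions λ_i (∇λ_j · rot ∇λ_k) contains all affine polynomials of degree at most 1 on m. -/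
open Matrix BigOperators

private lemma dot_sum_smul {N : ℕ} (a : Fin 2 → ℝ) (lam : Fin N → ℝ)
    (v : Fin N → Fin 2 → ℝ) :
    a ⬝ᵥ (∑ i, lam i • v i) = ∑ i, (a ⬝ᵥ v i) * lam i := by
  simp [dotProduct, Finset.sum_apply, Finset.mul_sum, Finset.sum_mul]
  rw [← Finset.sum_add_distrib]
  exact Finset.sum_congr rfl fun i _ => by ring

/-- For generalized barycentric coordinates `{λ_i}` on a convex polygon `m ⊆ ℝ²` and any
`a ∈ ℝ²`, `(1/2) Σ_{i,j,k} (a·v_i)(v_j · rot v_k) λ_i (∇λ_j · rot ∇λ_k) = a · x` holds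
pointwise; hence the span of the scalar functions `λ_i (∇λ_j · rot ∇λ_k)` contains all
affine polynomials of degree at most 1 on `m`. -/
theorem gbc_lnldrnl_reproduces_linear
    {N : ℕ} (m : Set (Fin 2 → ℝ)) (hm : Convex ℝ m)
    (v : Fin N → (Fin 2 → ℝ))
    (lam : Fin N → (Fin 2 → ℝ) → ℝ) (g : Fin N → (Fin 2 → ℝ) → (Fin 2 → ℝ))
    (hsum : ∀ x ∈ m, ∑ i, lam i x = 1)
    (hlin : ∀ x ∈ m, ∑ i, lam i x • v i = x)
    (hgsum : ∀ x ∈ m, ∑ i, g i x = 0)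
    (hgI : ∀ x ∈ m, ∑ i, Matrix.vecMulVec (v i) (g i x)
      = (1 : Matrix (Fin 2) (Fin 2) ℝ)) :
    (∀ a : Fin 2 → ℝ, ∀ x ∈ m,
      (1 / 2 : ℝ) * ∑ i, ∑ j, ∑ k,
          (a ⬝ᵥ v i) * (v j ⬝ᵥ rot (v k)) * (lam i x * (g j x ⬝ᵥ rot (g k x)))
        = a ⬝ᵥ x) ∧
    (∀ a : Fin 2 → ℝ, ∀ b : ℝ,
      ∃ c : Fin N → Fin N → Fin N → ℝ, ∀ x ∈ m,
        ∑ i, ∑ j, ∑ k, c i j k * (lam i x * (g j x ⬝ᵥ rot (g k x)))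
          = a ⬝ᵥ x + b) := by
  have key : ∀ x ∈ m, ∑ j, ∑ k, (v j ⬝ᵥ rot (v k)) * (g j x ⬝ᵥ rot (g k x)) = 2 := by
    intro x hx
    have hA : ∀ p q : Fin 2, (∑ i, v i p * g i x q) = if p = q then 1 else 0 := by
      intro p q
      have := congrFun (congrFun (hgI x hx) p) q
      simpa [Matrix.sum_apply, Matrix.vecMulVec, Matrix.one_apply] using this
    have expand : ∀ j k : Fin N,
        (v j ⬝ᵥ rot (v k)) * (g j x ⬝ᵥ rot (g k x)) =
          (v j 0 * g j x 0) * (v k 1 * g k x 1)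
          - (v j 0 * g j x 1) * (v k 1 * g k x 0)
          - (v j 1 * g j x 0) * (v k 0 * g k x 1)
          + (v j 1 * g j x 1) * (v k 0 * g k x 0) := by
      intro j k
      simp [rot, dotProduct, Fin.sum_univ_two]
      ring
    calc ∑ j, ∑ k, (v j ⬝ᵥ rot (v k)) * (g j x ⬝ᵥ rot (g k x))
        = (∑ j, v j 0 * g j x 0) * (∑ k, v k 1 * g k x 1)
          - (∑ j, v j 0 * g j x 1) * (∑ k, v k 1 * g k x 0)
          - (∑ j, v j 1 * g j x 0) * (∑ k, v k 0 * g k x 1)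
          + (∑ j, v j 1 * g j x 1) * (∑ k, v k 0 * g k x 0) := by
          simp only [expand, Finset.sum_add_distrib, Finset.sum_sub_distrib,
            ← Finset.sum_mul, ← Finset.mul_sum]
      _ = 2 := by simp [hA]; norm_num
  have h2 : ∀ a : Fin 2 → ℝ, ∀ x ∈ m, a ⬝ᵥ x = ∑ i, (a ⬝ᵥ v i) * lam i x := by
    intro a x hx
    conv_lhs => rw [← hlin x hx]
    rw [dot_sum_smul]
  have part1 : ∀ a : Fin 2 → ℝ, ∀ x ∈ m,
      (1 / 2 : ℝ) * ∑ i, ∑ j, ∑ k,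
          (a ⬝ᵥ v i) * (v j ⬝ᵥ rot (v k)) * (lam i x * (g j x ⬝ᵥ rot (g k x)))
        = a ⬝ᵥ x := by
    intro a x hx
    have h1 : ∑ i, ∑ j, ∑ k,
        (a ⬝ᵥ v i) * (v j ⬝ᵥ rot (v k)) * (lam i x * (g j x ⬝ᵥ rot (g k x)))
        = ∑ i, (a ⬝ᵥ v i) * lam i x * 2 := by
      refine Finset.sum_congr rfl fun i _ => ?_
      rw [show ∑ j, ∑ k, (a ⬝ᵥ v i) * (v j ⬝ᵥ rot (v k)) * (lam i x * (g j x ⬝ᵥ rot (g k x)))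
          = (a ⬝ᵥ v i) * lam i x * ∑ j, ∑ k, (v j ⬝ᵥ rot (v k)) * (g j x ⬝ᵥ rot (g k x)) by
        rw [Finset.mul_sum]; refine Finset.sum_congr rfl fun j _ => ?_
        rw [Finset.mul_sum]; refine Finset.sum_congr rfl fun k _ => ?_; ring]
      rw [key x hx]
    rw [h1, h2 a x hx, Finset.mul_sum]
    exact Finset.sum_congr rfl fun i _ => by ring
  refine ⟨part1, fun a b => ?_⟩
  refine ⟨fun i j k => ((a ⬝ᵥ v i) + b) * (v j ⬝ᵥ rot (v k)) / 2, fun x hx => ?_⟩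
  have h3 : ∑ i, ∑ j, ∑ k,
      (((a ⬝ᵥ v i) + b) * (v j ⬝ᵥ rot (v k)) / 2) * (lam i x * (g j x ⬝ᵥ rot (g k x)))
      = ∑ i, ((a ⬝ᵥ v i) + b) * lam i x := by
    refine Finset.sum_congr rfl fun i _ => ?_
    rw [show ∑ j, ∑ k, (((a ⬝ᵥ v i) + b) * (v j ⬝ᵥ rot (v k)) / 2) * (lam i x * (g j x ⬝ᵥ rot (g k x)))
        = (((a ⬝ᵥ v i) + b) * lam i x / 2) * ∑ j, ∑ k, (v j ⬝ᵥ rot (v k)) * (g j x ⬝ᵥ rot (g k x)) by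
      rw [Finset.mul_sum]; refine Finset.sum_congr rfl fun j _ => ?_
      rw [Finset.mul_sum]; refine Finset.sum_congr rfl fun k _ => ?_; ring]
    rw [key x hx]; ring
  rw [h3]
  have : ∑ i, ((a ⬝ᵥ v i) + b) * lam i x
      = (∑ i, (a ⬝ᵥ v i) * lam i x) + b * ∑ i, lam i x := by
    rw [Finset.mul_sum, ← Finset.sum_add_distrib]
    exact Finset.sum_congr rfl fun i _ => by ring
  rw [this, ← h2 a x hx, hsum x hx, mul_one]
end

section
/- For generalized barycentric coordinates {λ_i} on a convex polytope m in R^n, the Whitney 1-forms W_{ij} = λ_i ∇λ_j − λ_j ∇λ_i satisfy Σ_{i<j} W_{ij} (v_j − v_i)^T = I, the n×n identity matrix. -/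
open Matrix BigOperators

private theorem pair_sum_aux {N : ℕ} {M : Type*} [AddCommMonoid M] (f : Fin N → Fin N → M)
    (hsymm : ∀ i j, f j i = f i j) (hdiag : ∀ i, f i i = 0) :
    ∑ i, ∑ j, f i j = 2 • ∑ i, ∑ j ∈ Finset.Ioi i, f i j := by
  have h1 : ∀ i : Fin N, ∑ j, f i j = ∑ j ∈ Finset.Ioi i, f i j + ∑ j ∈ Finset.Iio i, f i j := by
    intro i
    have hc := Finset.sum_compl_add_sum ({i} : Finset (Fin N)) (f i)
    rw [Finset.sum_singleton, hdiag, add_zero] at hc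
    have hset : (Finset.Ioi i).disjUnion (Finset.Iio i) (Finset.disjoint_Ioi_Iio i)
        = ({i} : Finset (Fin N))ᶜ := by
      ext j; simp [eq_comm, lt_or_lt_iff_ne]
    rw [← hc, ← hset, Finset.sum_disjUnion]
  simp_rw [h1, Finset.sum_add_distrib]
  have h2 : ∑ i : Fin N, ∑ j ∈ Finset.Iio i, f i j = ∑ i : Fin N, ∑ j ∈ Finset.Ioi i, f i j := by
    rw [Finset.sum_comm' (t' := Finset.univ) (s' := fun j => Finset.Ioi j) (by simp)]
    exact Finset.sum_congr rfl fun j _ => Finset.sum_congr rfl fun i _ => (hsymm i j).symm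
  rw [h2, two_smul]

/-- For generalized barycentric coordinates `{λ_i}` on a convex polytope `m ⊆ ℝⁿ`
(values and gradients at a point, satisfying the four barycentric identities), the
Whitney 1-forms `W_{ij} = λ_i ∇λ_j − λ_j ∇λ_i` satisfy
`Σ_{i<j} W_{ij} (v_j − v_i)ᵀ = I`. -/
theorem whitney_one_forms_reproduce_identity
    {n N : ℕ} (v : Fin N → (Fin n → ℝ)) (x : Fin n → ℝ)
    (l : Fin N → ℝ) (g : Fin N → (Fin n → ℝ))
    (hsum : ∑ i, l i = 1)
    (hlin : ∑ i, l i • v i = x)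
    (hgsum : ∑ i, g i = 0)
    (hgI : ∑ i, Matrix.vecMulVec (v i) (g i) = (1 : Matrix (Fin n) (Fin n) ℝ)) :
    ∑ i, ∑ j ∈ Finset.Ioi i,
        Matrix.vecMulVec (l i • g j - l j • g i) (v j - v i)
      = (1 : Matrix (Fin n) (Fin n) ℝ) := by
  ext a b
  simp only [Matrix.sum_apply, Matrix.vecMulVec_apply, Pi.sub_apply, Pi.smul_apply,
    smul_eq_mul, Matrix.one_apply]
  set F : Fin N → Fin N → ℝ :=
    fun i j => (l i * g j a - l j * g i a) * (v j b - v i b) with hF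
  have hsymm : ∀ i j, F j i = F i j := by intro i j; simp only [hF]; ring
  have hdiag : ∀ i, F i i = 0 := by intro i; simp only [hF]; ring
  have hpair := pair_sum_aux F hsymm hdiag
  -- entrywise hypotheses
  have hga : ∑ i, g i a = 0 := by
    have := congrFun hgsum a
    simpa [Finset.sum_apply] using this
  have hvb : ∑ i, l i * v i b = x b := by
    have := congrFun hlin b
    simpa [Finset.sum_apply] using this
  have hI : ∑ i, v i b * g i a = if b = a then 1 else 0 := by
    have := congrFun (congrFun hgI b) a
    simpa [Matrix.sum_apply, Matrix.vecMulVec_apply, Matrix.one_apply] using this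
  have hI' : ∑ i, g i a * v i b = if b = a then 1 else 0 := by
    rw [← hI]; exact Finset.sum_congr rfl fun i _ => mul_comm _ _
  have inner : ∀ i, ∑ j, F i j =
      l i * (∑ j, g j a * v j b) - (∑ j, g j a) * (l i * v i b)
        - g i a * (∑ j, l j * v j b) + (∑ j, l j) * (g i a * v i b) := by
    intro i
    calc ∑ j, F i j
        = ∑ j, (l i * (g j a * v j b) - g j a * (l i * v i b)
            - g i a * (l j * v j b) + l j * (g i a * v i b)) :=
          Finset.sum_congr rfl fun j _ => by simp only [hF]; ring
      _ = _ := by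
          rw [Finset.sum_add_distrib, Finset.sum_sub_distrib, Finset.sum_sub_distrib,
            ← Finset.mul_sum, ← Finset.sum_mul, ← Finset.mul_sum, ← Finset.sum_mul]
  have hfull : ∑ i, ∑ j, F i j = 2 * (if b = a then 1 else 0) := by
    simp_rw [inner, hI', hga, hvb, hsum, zero_mul, one_mul, sub_zero]
    rw [Finset.sum_add_distrib, Finset.sum_sub_distrib, ← Finset.sum_mul, ← Finset.sum_mul,
      hsum, hga, hI']
    ring
  rw [hpair, nsmul_eq_mul] at hfull
  have key : ∑ i, ∑ j ∈ Finset.Ioi i, F i j = if b = a then 1 else 0 := by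
    push_cast at hfull
    linarith
  rw [key]
  simp [eq_comm]
end

section
/- For generalized barycentric coordinates {λ_i} on a convex polytope m in R^n and any antisymmetric n×n matrix B, the identity Σ_{i<j} (B v_i · v_j) W_{ij} = B x holds pointwise, where W_{ij} = λ_i ∇λ_j − λ_j ∇λ_i. -/
open Matrix BigOperators

/-- For generalized barycentric coordinates `{λ_i}` on a convex polytope `m ⊆ ℝⁿ` and any
antisymmetric `n×n` matrix `B`, the identity `Σ_{i<j} (B v_i · v_j) W_{ij} = B x` holds
pointwise, where `W_{ij} = λ_i ∇λ_j − λ_j ∇λ_i`. -/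
theorem whitney_one_forms_reproduce_koszul
    {n N : ℕ} (v : Fin N → (Fin n → ℝ)) (x : Fin n → ℝ)
    (l : Fin N → ℝ) (g : Fin N → (Fin n → ℝ))
    (hsum : ∑ i, l i = 1)
    (hlin : ∑ i, l i • v i = x)
    (hgsum : ∑ i, g i = 0)
    (hgI : ∑ i, Matrix.vecMulVec (v i) (g i) = (1 : Matrix (Fin n) (Fin n) ℝ))
    (B : Matrix (Fin n) (Fin n) ℝ) (hB : Bᵀ = -B) :
    ∑ i, ∑ j ∈ Finset.Ioi i,
        (B.mulVec (v i) ⬝ᵥ v j) • (l i • g j - l j • g i)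
      = B.mulVec x := by
  -- antisymmetry of the bilinear form
  have key : ∀ a b : Fin n → ℝ, B.mulVec a ⬝ᵥ b = -(B.mulVec b ⬝ᵥ a) := by
    intro a b
    rw [dotProduct_comm, Matrix.dotProduct_mulVec, ← Matrix.mulVec_transpose, hB,
      Matrix.neg_mulVec, neg_dotProduct]
  set s : Fin N → Fin N → (Fin n → ℝ) :=
    fun a b => (B.mulVec (v a) ⬝ᵥ v b) • (l a • g b) with hs
  have hdiag : ∀ a, s a a = 0 := by
    intro a
    have h0 : B.mulVec (v a) ⬝ᵥ v a = 0 := by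
      have := key (v a) (v a); linarith
    simp [hs, h0]
  have step1 : ∑ i, ∑ j ∈ Finset.Ioi i,
      (B.mulVec (v i) ⬝ᵥ v j) • (l i • g j - l j • g i) = ∑ i, ∑ j, s i j := by
    have hsplit : ∀ i j, (B.mulVec (v i) ⬝ᵥ v j) • (l i • g j - l j • g i)
        = s j i + s i j := by
      intro i j
      simp only [hs, smul_sub, key (v i) (v j), neg_smul, neg_neg]
      abel
    calc ∑ i, ∑ j ∈ Finset.Ioi i,
          (B.mulVec (v i) ⬝ᵥ v j) • (l i • g j - l j • g i)
        = ∑ i, ∑ j ∈ Finset.Ioi i, (s j i + s i j) := by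
          simp_rw [hsplit]
      _ = ∑ i, ∑ j, s j i := by
          rw [Finset.sum_sum_Ioi_add_eq_sum_sum_off_diag]
          refine Finset.sum_congr rfl fun i _ => ?_
          rw [← Finset.sum_compl_add_sum {i}, Finset.sum_singleton, hdiag, add_zero]
      _ = ∑ i, ∑ j, s i j := Finset.sum_comm
  rw [step1]
  have hBx : ∑ i, l i • B.mulVec (v i) = B.mulVec x := by
    rw [← hlin]
    simp_rw [← Matrix.mulVec_smul]
    ext k
    simp [Matrix.mulVec, dotProduct, Finset.mul_sum, Finset.sum_comm (γ := Fin N)]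
  have hds : ∀ (w : Fin N → (Fin n → ℝ)) (u : Fin n → ℝ),
      (∑ i, w i) ⬝ᵥ u = ∑ i, w i ⬝ᵥ u := by
    intro w u
    simp only [dotProduct, Finset.sum_apply, Finset.sum_mul]
    exact Finset.sum_comm
  have step2 : ∀ j, ∑ i, s i j = (B.mulVec x ⬝ᵥ v j) • g j := by
    intro j
    have h1 : ∑ i, s i j = (∑ i, (l i • B.mulVec (v i)) ⬝ᵥ v j) • g j := by
      rw [Finset.sum_smul]
      refine Finset.sum_congr rfl fun i _ => ?_
      rw [hs]
      simp [smul_dotProduct, smul_smul, mul_comm]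
    rw [h1, ← hds, hBx]
  rw [Finset.sum_comm]
  simp_rw [step2]
  -- final step using hgI
  funext k
  have h2 : ∀ p : Fin n, ∑ j, v j p * g j k = (1 : Matrix (Fin n) (Fin n) ℝ) p k := by
    intro p
    have := congrFun (congrFun hgI p) k
    simpa [Matrix.sum_apply, Matrix.vecMulVec_apply] using this
  calc (∑ j, (B.mulVec x ⬝ᵥ v j) • g j) k
      = ∑ j, ∑ p, B.mulVec x p * (v j p * g j k) := by
        simp [dotProduct, Finset.sum_mul, mul_assoc]
    _ = ∑ p, B.mulVec x p * ∑ j, v j p * g j k := by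
        rw [Finset.sum_comm]
        simp [Finset.mul_sum]
    _ = B.mulVec x k := by
        simp_rw [h2]
        simp [Matrix.one_apply]
end

section
/- For generalized barycentric coordinates {λ_i} on a convex polyhedron m in R^3, the Whitney 2-forms W_{ijk} := λ_i(∇λ_j × ∇λ_k) + λ_j(∇λ_k × ∇λ_i) + λ_k(∇λ_i × ∇λ_j) satisfy Σ_{i<j<k} W_{ijk} ((v_j − v_i) × (v_k − v_i))^T = I, the 3×3 identity matrix. -/
open Matrix BigOperators

section WhitneyAux

variable {N : ℕ}

private lemma vmv_add_left (a b w : Fin 3 → ℝ) :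
    Matrix.vecMulVec (a + b) w = Matrix.vecMulVec a w + Matrix.vecMulVec b w := by
  ext p q; simp [Matrix.vecMulVec_apply, add_mul]

private lemma vmv_add_right (a w₁ w₂ : Fin 3 → ℝ) :
    Matrix.vecMulVec a (w₁ + w₂) = Matrix.vecMulVec a w₁ + Matrix.vecMulVec a w₂ := by
  ext p q; simp [Matrix.vecMulVec_apply, mul_add]

private lemma vmv_smul_left (r : ℝ) (a w : Fin 3 → ℝ) :
    Matrix.vecMulVec (r • a) w = r • Matrix.vecMulVec a w := by
  ext p q; simp [Matrix.vecMulVec_apply, mul_assoc]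

private lemma vmv_zero_left (w : Fin 3 → ℝ) :
    Matrix.vecMulVec (0 : Fin 3 → ℝ) w = 0 := by
  ext p q; simp [Matrix.vecMulVec_apply]

private lemma vmv_zero_right (a : Fin 3 → ℝ) :
    Matrix.vecMulVec a (0 : Fin 3 → ℝ) = 0 := by
  ext p q; simp [Matrix.vecMulVec_apply]

private lemma vmv_neg_left (a w : Fin 3 → ℝ) :
    Matrix.vecMulVec (-a) w = -(Matrix.vecMulVec a w) := by
  ext p q; simp [Matrix.vecMulVec_apply]

private lemma vmv_neg_neg (a w : Fin 3 → ℝ) :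
    Matrix.vecMulVec (-a) (-w) = Matrix.vecMulVec a w := by
  ext p q; simp [Matrix.vecMulVec_apply]

private lemma vmv_sum_left (f : Fin N → Fin 3 → ℝ) (w : Fin 3 → ℝ) :
    ∑ t, Matrix.vecMulVec (f t) w = Matrix.vecMulVec (∑ t, f t) w := by
  ext p q
  simp [Matrix.sum_apply, Matrix.vecMulVec_apply, Finset.sum_apply, Finset.sum_mul]

private lemma cross_sub_sub (a b c : Fin 3 → ℝ) :
    crossProduct (b - a) (c - a)
      = crossProduct b c + crossProduct a b + crossProduct c a := by
  ext p
  fin_cases p <;> simp [cross_apply, Pi.sub_apply] <;> ring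

private lemma cross_entry (u w : Fin 3 → ℝ) (a : Fin 3) :
    crossProduct u w a = u (a + 1) * w (a + 2) - u (a + 2) * w (a + 1) := by
  fin_cases a <;> simp [cross_apply]

/-- The six-fold symmetrization lemma. -/
private lemma six_smul {M : Type*} [AddCommMonoid M] (F : Fin N → Fin N → Fin N → M)
    (h12 : ∀ i j k, F j i k = F i j k) (h23 : ∀ i j k, F i k j = F i j k)
    (hz : ∀ i k, F i i k = 0) :
    (6 : ℕ) • (∑ i, ∑ j ∈ Finset.Ioi i, ∑ k ∈ Finset.Ioi j, F i j k)
      = ∑ i, ∑ j, ∑ k, F i j k := by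
  have hz2 : ∀ i j, F i j j = 0 := by
    intro i j; rw [← h12, h23]; exact hz j i
  have hz3 : ∀ i j, F i j i = 0 := by
    intro i j; rw [h23]; exact hz i j
  have key : ∀ i j k : Fin N, F i j k =
      (if i < j ∧ j < k then F i j k else 0) + (if i < k ∧ k < j then F i k j else 0)
      + (if j < i ∧ i < k then F j i k else 0) + (if j < k ∧ k < i then F j k i else 0)
      + (if k < i ∧ i < j then F k i j else 0) + (if k < j ∧ j < i then F k j i else 0) := by
    intro i j k
    have e1 : F i k j = F i j k := h23 i j k
    have e2 : F j i k = F i j k := h12 i j k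
    have e3 : F j k i = F i j k := by rw [h23, h12]
    have e4 : F k i j = F i j k := by rw [h12, h23]
    have e5 : F k j i = F i j k := by rw [h12, h23, h12]
    rw [e1, e2, e3, e4, e5]
    rcases lt_trichotomy i j with hij | rfl | hij
    · rcases lt_trichotomy j k with hjk | rfl | hjk
      · have hik := hij.trans hjk
        simp [hij, hjk, hik, lt_asymm hij, lt_asymm hjk, lt_asymm hik]
      · simp [hz2, lt_irrefl, lt_asymm hij]
      · rcases lt_trichotomy i k with hik | rfl | hik
        · simp [hij, hjk, hik, lt_asymm hij, lt_asymm hjk, lt_asymm hik]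
        · simp [hz3, lt_irrefl, lt_asymm hij]
        · have hji := hik.trans hij
          simp [hij, hjk, hik, lt_asymm hij, lt_asymm hjk, lt_asymm hik]
    · have hni : ∀ a b : Fin N, ¬ (a < b ∧ b < a) := by
        intro a b h; exact absurd (h.1.trans h.2) (lt_irrefl _)
      simp [hz, lt_irrefl, hni]
    · rcases lt_trichotomy i k with hik | rfl | hik
      · have hjk := hij.trans hik
        simp [hij, hjk, hik, lt_asymm hij, lt_asymm hjk, lt_asymm hik]
      · simp [hz3, lt_irrefl, lt_asymm hij]
      · rcases lt_trichotomy j k with hjk | rfl | hjk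
        · simp [hij, hjk, hik, lt_asymm hij, lt_asymm hjk, lt_asymm hik]
        · simp [hz2, lt_irrefl, lt_asymm hij]
        · simp [hij, hjk, hik, lt_asymm hij, lt_asymm hjk, lt_asymm hik]
  have hIoi : ∀ (f : Fin N → M) (i : Fin N),
      ∑ j ∈ Finset.Ioi i, f j = ∑ j, if i < j then f j else 0 := by
    intro f i; rw [← Finset.sum_filter, Finset.filter_lt_eq_Ioi]
  have hC : (∑ i, ∑ j ∈ Finset.Ioi i, ∑ k ∈ Finset.Ioi j, F i j k)
      = ∑ i, ∑ j, ∑ k, if i < j ∧ j < k then F i j k else 0 := by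
    refine Finset.sum_congr rfl fun i _ => ?_
    rw [hIoi (fun j => ∑ k ∈ Finset.Ioi j, F i j k) i]
    refine Finset.sum_congr rfl fun j _ => ?_
    by_cases h : i < j
    · simp only [h, if_true, true_and, hIoi (fun k => F i j k) j]
    · simp [h]
  have hsplit : ∑ i, ∑ j, ∑ k, F i j k
      = (∑ i : Fin N, ∑ j : Fin N, ∑ k : Fin N, if i < j ∧ j < k then F i j k else 0)
      + (∑ i : Fin N, ∑ j : Fin N, ∑ k : Fin N, if i < k ∧ k < j then F i k j else 0)
      + (∑ i : Fin N, ∑ j : Fin N, ∑ k : Fin N, if j < i ∧ i < k then F j i k else 0)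
      + (∑ i : Fin N, ∑ j : Fin N, ∑ k : Fin N, if j < k ∧ k < i then F j k i else 0)
      + (∑ i : Fin N, ∑ j : Fin N, ∑ k : Fin N, if k < i ∧ i < j then F k i j else 0)
      + (∑ i : Fin N, ∑ j : Fin N, ∑ k : Fin N, if k < j ∧ j < i then F k j i else 0) := by
    simp only [← Finset.sum_add_distrib]
    exact Finset.sum_congr rfl fun i _ => Finset.sum_congr rfl fun j _ =>
      Finset.sum_congr rfl fun k _ => key i j k
  set S0 : M := ∑ i : Fin N, ∑ j : Fin N, ∑ k : Fin N, if i < j ∧ j < k then F i j k else 0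
    with hS0
  have t2 : (∑ i : Fin N, ∑ j : Fin N, ∑ k : Fin N, if i < k ∧ k < j then F i k j else 0)
      = S0 := by
    rw [hS0]; exact Finset.sum_congr rfl fun i _ => Finset.sum_comm
  have t3 : (∑ i : Fin N, ∑ j : Fin N, ∑ k : Fin N, if j < i ∧ i < k then F j i k else 0)
      = S0 := by
    rw [hS0]; exact Finset.sum_comm
  have t4 : (∑ i : Fin N, ∑ j : Fin N, ∑ k : Fin N, if j < k ∧ k < i then F j k i else 0)
      = S0 := by
    rw [hS0, Finset.sum_comm]
    exact Finset.sum_congr rfl fun j _ => Finset.sum_comm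
  have t5 : (∑ i : Fin N, ∑ j : Fin N, ∑ k : Fin N, if k < i ∧ i < j then F k i j else 0)
      = S0 := by
    rw [hS0]
    rw [show (∑ i : Fin N, ∑ j : Fin N, ∑ k : Fin N, if k < i ∧ i < j then F k i j else 0)
        = ∑ i : Fin N, ∑ k : Fin N, ∑ j : Fin N, if k < i ∧ i < j then F k i j else 0 from
      Finset.sum_congr rfl fun i _ => Finset.sum_comm]
    exact Finset.sum_comm
  have t6 : (∑ i : Fin N, ∑ j : Fin N, ∑ k : Fin N, if k < j ∧ j < i then F k j i else 0)
      = S0 := by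
    rw [hS0]
    rw [show (∑ i : Fin N, ∑ j : Fin N, ∑ k : Fin N, if k < j ∧ j < i then F k j i else 0)
        = ∑ i : Fin N, ∑ k : Fin N, ∑ j : Fin N, if k < j ∧ j < i then F k j i else 0 from
      Finset.sum_congr rfl fun i _ => Finset.sum_comm]
    rw [show (∑ i : Fin N, ∑ k : Fin N, ∑ j : Fin N, if k < j ∧ j < i then F k j i else 0)
        = ∑ k : Fin N, ∑ i : Fin N, ∑ j : Fin N, if k < j ∧ j < i then F k j i else 0 from
      Finset.sum_comm]
    exact Finset.sum_congr rfl fun k _ => Finset.sum_comm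
  rw [hsplit, t2, t3, t4, t5, t6, hC]
  abel

end WhitneyAux

/-- For generalized barycentric coordinates `{λ_i}` on a convex polyhedron `m ⊆ ℝ³`,
the Whitney 2-forms
`W_{ijk} = λ_i(∇λ_j × ∇λ_k) + λ_j(∇λ_k × ∇λ_i) + λ_k(∇λ_i × ∇λ_j)` satisfy
`Σ_{i<j<k} W_{ijk} ((v_j − v_i) × (v_k − v_i))ᵀ = I`. -/
theorem whitney_two_forms_reproduce_identity
    {N : ℕ} (v : Fin N → (Fin 3 → ℝ)) (x : Fin 3 → ℝ)
    (l : Fin N → ℝ) (g : Fin N → (Fin 3 → ℝ))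
    (hsum : ∑ i, l i = 1)
    (hlin : ∑ i, l i • v i = x)
    (hgsum : ∑ i, g i = 0)
    (hgI : ∑ i, Matrix.vecMulVec (v i) (g i) = (1 : Matrix (Fin 3) (Fin 3) ℝ)) :
    ∑ i, ∑ j ∈ Finset.Ioi i, ∑ k ∈ Finset.Ioi j,
        Matrix.vecMulVec
          (l i • crossProduct (g j) (g k) + l j • crossProduct (g k) (g i)
            + l k • crossProduct (g i) (g j))
          (crossProduct (v j - v i) (v k - v i))
      = (1 : Matrix (Fin 3) (Fin 3) ℝ) := by
  classical
  -- symmetry of the summand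
  have h12 : ∀ i j k : Fin N,
      Matrix.vecMulVec
        (l j • crossProduct (g i) (g k) + l i • crossProduct (g k) (g j)
          + l k • crossProduct (g j) (g i))
        (crossProduct (v i - v j) (v k - v j))
      = Matrix.vecMulVec
        (l i • crossProduct (g j) (g k) + l j • crossProduct (g k) (g i)
          + l k • crossProduct (g i) (g j))
        (crossProduct (v j - v i) (v k - v i)) := by
    intro i j k
    have hW : l j • crossProduct (g i) (g k) + l i • crossProduct (g k) (g j)
        + l k • crossProduct (g j) (g i)
        = -(l i • crossProduct (g j) (g k) + l j • crossProduct (g k) (g i)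
          + l k • crossProduct (g i) (g j)) := by
      ext p; fin_cases p <;>
        simp [cross_apply, Pi.add_apply, Pi.smul_apply, smul_eq_mul] <;> ring
    have hV : crossProduct (v i - v j) (v k - v j)
        = -(crossProduct (v j - v i) (v k - v i)) := by
      ext p; fin_cases p <;> simp [cross_apply, Pi.sub_apply] <;> ring
    rw [hW, hV, vmv_neg_neg]
  have h23 : ∀ i j k : Fin N,
      Matrix.vecMulVec
        (l i • crossProduct (g k) (g j) + l k • crossProduct (g j) (g i)
          + l j • crossProduct (g i) (g k))
        (crossProduct (v k - v i) (v j - v i))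
      = Matrix.vecMulVec
        (l i • crossProduct (g j) (g k) + l j • crossProduct (g k) (g i)
          + l k • crossProduct (g i) (g j))
        (crossProduct (v j - v i) (v k - v i)) := by
    intro i j k
    have hW : l i • crossProduct (g k) (g j) + l k • crossProduct (g j) (g i)
        + l j • crossProduct (g i) (g k)
        = -(l i • crossProduct (g j) (g k) + l j • crossProduct (g k) (g i)
          + l k • crossProduct (g i) (g j)) := by
      ext p; fin_cases p <;>
        simp [cross_apply, Pi.add_apply, Pi.smul_apply, smul_eq_mul] <;> ring
    have hV : crossProduct (v k - v i) (v j - v i)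
        = -(crossProduct (v j - v i) (v k - v i)) := by
      ext p; fin_cases p <;> simp [cross_apply, Pi.sub_apply] <;> ring
    rw [hW, hV, vmv_neg_neg]
  have hz : ∀ i k : Fin N,
      Matrix.vecMulVec
        (l i • crossProduct (g i) (g k) + l i • crossProduct (g k) (g i)
          + l k • crossProduct (g i) (g i))
        (crossProduct (v i - v i) (v k - v i)) = 0 := by
    intro i k
    rw [sub_self, map_zero, LinearMap.zero_apply, vmv_zero_right]
  -- helper vanishing sums
  have hczR : ∀ (u w : Fin 3 → ℝ), (∑ t, Matrix.vecMulVec (crossProduct u (g t)) w) = 0 := by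
    intro u w
    rw [vmv_sum_left, ← map_sum, hgsum, map_zero, vmv_zero_left]
  have hczL : ∀ (u w : Fin 3 → ℝ), (∑ t, Matrix.vecMulVec (crossProduct (g t) u) w) = 0 := by
    intro u w
    have h : ∀ t, Matrix.vecMulVec (crossProduct (g t) u) w
        = -(Matrix.vecMulVec (crossProduct u (g t)) w) := by
      intro t
      rw [(cross_anticomm u (g t)).symm, vmv_neg_left]
    simp only [h, Finset.sum_neg_distrib]
    rw [hczR, neg_zero]
  -- central 2I computation
  have hP : ∀ e b : Fin 3, (∑ t, v t e * g t b) = if e = b then (1:ℝ) else 0 := by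
    intro e b
    have h := congrFun (congrFun hgI e) b
    simpa [Matrix.sum_apply, Matrix.vecMulVec_apply, Matrix.one_apply] using h
  have keyS : ∀ b c e f : Fin 3,
      (∑ j, ∑ k, (g j b * g k c - g j c * g k b) * (v j e * v k f - v j f * v k e))
      = 2 * ((if e = b then (1:ℝ) else 0) * (if f = c then (1:ℝ) else 0)
          - (if f = b then (1:ℝ) else 0) * (if e = c then (1:ℝ) else 0)) := by
    intro b c e f
    have h1 : ∀ j k : Fin N,
        (g j b * g k c - g j c * g k b) * (v j e * v k f - v j f * v k e)
        = (v j e * g j b) * (v k f * g k c) - (v j f * g j b) * (v k e * g k c)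
          - ((v j e * g j c) * (v k f * g k b) - (v j f * g j c) * (v k e * g k b)) := by
      intro j k; ring
    simp only [h1, Finset.sum_sub_distrib, ← Finset.sum_mul_sum]
    rw [hP, hP, hP, hP]
    ring
  have hS : (∑ j, ∑ k,
        Matrix.vecMulVec (crossProduct (g j) (g k)) (crossProduct (v j) (v k)))
      = (2 : ℝ) • (1 : Matrix (Fin 3) (Fin 3) ℝ) := by
    ext a d
    simp only [Matrix.sum_apply, Matrix.vecMulVec_apply, cross_entry]
    rw [keyS (a+1) (a+2) (d+1) (d+2)]
    fin_cases a <;> fin_cases d <;> simp [Matrix.smul_apply, Matrix.one_apply]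
  -- the nine pieces
  have hT1 : (∑ i, ∑ j, ∑ k, l i •
        Matrix.vecMulVec (crossProduct (g j) (g k)) (crossProduct (v j) (v k)))
      = (2 : ℝ) • (1 : Matrix (Fin 3) (Fin 3) ℝ) := by
    simp only [← Finset.smul_sum]
    rw [← Finset.sum_smul, hsum, one_smul, hS]
  have hT2 : (∑ i, ∑ j, ∑ k, l i •
        Matrix.vecMulVec (crossProduct (g j) (g k)) (crossProduct (v i) (v j))) = 0 := by
    refine Finset.sum_eq_zero fun i _ => Finset.sum_eq_zero fun j _ => ?_
    rw [← Finset.smul_sum, hczR, smul_zero]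
  have hT3 : (∑ i, ∑ j, ∑ k, l i •
        Matrix.vecMulVec (crossProduct (g j) (g k)) (crossProduct (v k) (v i))) = 0 := by
    refine Finset.sum_eq_zero fun i _ => ?_
    rw [Finset.sum_comm]
    refine Finset.sum_eq_zero fun k _ => ?_
    rw [← Finset.smul_sum, hczL, smul_zero]
  have hT4 : (∑ i, ∑ j, ∑ k, l j •
        Matrix.vecMulVec (crossProduct (g k) (g i)) (crossProduct (v j) (v k))) = 0 := by
    rw [Finset.sum_comm]
    refine Finset.sum_eq_zero fun j _ => ?_
    rw [Finset.sum_comm]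
    refine Finset.sum_eq_zero fun k _ => ?_
    rw [← Finset.smul_sum, hczR, smul_zero]
  have hT5 : (∑ i, ∑ j, ∑ k, l j •
        Matrix.vecMulVec (crossProduct (g k) (g i)) (crossProduct (v i) (v j))) = 0 := by
    refine Finset.sum_eq_zero fun i _ => Finset.sum_eq_zero fun j _ => ?_
    rw [← Finset.smul_sum, hczL, smul_zero]
  have hT6 : (∑ i, ∑ j, ∑ k, l j •
        Matrix.vecMulVec (crossProduct (g k) (g i)) (crossProduct (v k) (v i)))
      = (2 : ℝ) • (1 : Matrix (Fin 3) (Fin 3) ℝ) := by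
    rw [Finset.sum_comm]
    simp only [← Finset.smul_sum]
    rw [← Finset.sum_smul, hsum, one_smul]
    rw [Finset.sum_comm]
    exact hS
  have hT7 : (∑ i, ∑ j, ∑ k, l k •
        Matrix.vecMulVec (crossProduct (g i) (g j)) (crossProduct (v j) (v k))) = 0 := by
    rw [Finset.sum_comm]
    refine Finset.sum_eq_zero fun j _ => ?_
    rw [Finset.sum_comm]
    refine Finset.sum_eq_zero fun k _ => ?_
    rw [← Finset.smul_sum, hczL, smul_zero]
  have hT8 : (∑ i, ∑ j, ∑ k, l k •
        Matrix.vecMulVec (crossProduct (g i) (g j)) (crossProduct (v i) (v j)))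
      = (2 : ℝ) • (1 : Matrix (Fin 3) (Fin 3) ℝ) := by
    have h8 : ∀ i j : Fin N, (∑ k, l k •
        Matrix.vecMulVec (crossProduct (g i) (g j)) (crossProduct (v i) (v j)))
        = Matrix.vecMulVec (crossProduct (g i) (g j)) (crossProduct (v i) (v j)) := by
      intro i j; rw [← Finset.sum_smul, hsum, one_smul]
    simp only [h8]
    exact hS
  have hT9 : (∑ i, ∑ j, ∑ k, l k •
        Matrix.vecMulVec (crossProduct (g i) (g j)) (crossProduct (v k) (v i))) = 0 := by
    refine Finset.sum_eq_zero fun i _ => ?_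
    rw [Finset.sum_comm]
    refine Finset.sum_eq_zero fun k _ => ?_
    rw [← Finset.smul_sum, hczR, smul_zero]
  -- the full (unrestricted) sum
  have hfull : (∑ i, ∑ j, ∑ k,
        Matrix.vecMulVec
          (l i • crossProduct (g j) (g k) + l j • crossProduct (g k) (g i)
            + l k • crossProduct (g i) (g j))
          (crossProduct (v j - v i) (v k - v i)))
      = (6 : ℝ) • (1 : Matrix (Fin 3) (Fin 3) ℝ) := by
    simp only [cross_sub_sub, vmv_add_left, vmv_add_right, vmv_smul_left,
      smul_add, Finset.sum_add_distrib]
    rw [hT1, hT2, hT3, hT4, hT5, hT6, hT7, hT8, hT9]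
    simp only [add_zero, zero_add]
    rw [← add_smul, ← add_smul]
    norm_num
  have h6 := six_smul
    (fun i j k =>
      Matrix.vecMulVec
        (l i • crossProduct (g j) (g k) + l j • crossProduct (g k) (g i)
          + l k • crossProduct (g i) (g j))
        (crossProduct (v j - v i) (v k - v i)))
    (fun i j k => h12 i j k) (fun i j k => h23 i j k) (fun i k => hz i k)
  rw [hfull] at h6
  have h7 : (6 : ℝ) • (∑ i, ∑ j ∈ Finset.Ioi i, ∑ k ∈ Finset.Ioi j,
      Matrix.vecMulVec
        (l i • crossProduct (g j) (g k) + l j • crossProduct (g k) (g i)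
          + l k • crossProduct (g i) (g j))
        (crossProduct (v j - v i) (v k - v i)))
      = (6 : ℝ) • (1 : Matrix (Fin 3) (Fin 3) ℝ) := by
    rw [show (6:ℝ) = ((6:ℕ):ℝ) by norm_num, Nat.cast_smul_eq_nsmul]
    exact h6
  exact smul_right_injective _ (by norm_num : (6:ℝ) ≠ 0) h7
end

section
/- For generalized barycentric coordinates {λ_i} on a convex polyhedron m in R^3, the identity Σ_{i<j<k} (v_i · (v_j × v_k)) W_{ijk} = x holds pointwise, where W_{ijk} := λ_i(∇λ_j × ∇λ_k) + λ_j(∇λ_k × ∇λ_i) + λ_k(∇λ_i × ∇λ_j) and x is the position vector. -/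
open Matrix BigOperators

private def eps : Fin 3 → Fin 3 → Fin 3 → ℝ
  | 0,1,2 => 1
  | 1,2,0 => 1
  | 2,0,1 => 1
  | 0,2,1 => -1
  | 2,1,0 => -1
  | 1,0,2 => -1
  | _,_,_ => 0

private def G (A B : Matrix (Fin 3) (Fin 3) ℝ) (w : Fin 3 → ℝ) (p : Fin 3) : ℝ :=
  ∑ a, ∑ b, ∑ c, ∑ q, ∑ r, eps a b c * eps p q r * w a * A b q * B c r

private lemma G_eq (u x y z w : Fin 3 → ℝ) (p : Fin 3) :
    (w ⬝ᵥ crossProduct u x) * crossProduct y z p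
      = G (vecMulVec u y) (vecMulVec x z) w p := by
  fin_cases p <;>
    simp [G, eps, cross_apply, dotProduct, vecMulVec, Fin.sum_univ_three] <;> ring

private lemma G_one_one (w : Fin 3 → ℝ) (p : Fin 3) : G 1 1 w p = 2 * w p := by
  fin_cases p <;>
    simp [G, eps, Fin.sum_univ_three, Matrix.one_apply] <;> ring

private lemma G_add_left (A A' B : Matrix (Fin 3) (Fin 3) ℝ) (w : Fin 3 → ℝ) (p : Fin 3) :
    G (A + A') B w p = G A B w p + G A' B w p := by
  simp [G, Matrix.add_apply, mul_add, add_mul, Finset.sum_add_distrib]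

private lemma G_add_right (A B B' : Matrix (Fin 3) (Fin 3) ℝ) (w : Fin 3 → ℝ) (p : Fin 3) :
    G A (B + B') w p = G A B w p + G A B' w p := by
  simp [G, Matrix.add_apply, mul_add, add_mul, Finset.sum_add_distrib]

private lemma G_zero_left (B : Matrix (Fin 3) (Fin 3) ℝ) (w : Fin 3 → ℝ) (p : Fin 3) :
    G 0 B w p = 0 := by simp [G]

private lemma G_zero_right (A : Matrix (Fin 3) (Fin 3) ℝ) (w : Fin 3 → ℝ) (p : Fin 3) :
    G A 0 w p = 0 := by simp [G]

private lemma G_sum_left {ι : Type*} (s : Finset ι) (f : ι → Matrix (Fin 3) (Fin 3) ℝ)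
    (B : Matrix (Fin 3) (Fin 3) ℝ) (w : Fin 3 → ℝ) (p : Fin 3) :
    G (∑ j ∈ s, f j) B w p = ∑ j ∈ s, G (f j) B w p := by
  induction s using Finset.cons_induction with
  | empty => simp [G_zero_left]
  | cons a s ha ih => simp [Finset.sum_cons, G_add_left, ih]

private lemma G_sum_right {ι : Type*} (s : Finset ι) (A : Matrix (Fin 3) (Fin 3) ℝ)
    (f : ι → Matrix (Fin 3) (Fin 3) ℝ) (w : Fin 3 → ℝ) (p : Fin 3) :
    G A (∑ j ∈ s, f j) w p = ∑ j ∈ s, G A (f j) w p := by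
  induction s using Finset.cons_induction with
  | empty => simp [G_zero_right]
  | cons a s ha ih => simp [Finset.sum_cons, G_add_right, ih]

private lemma key {N : ℕ} (v g : Fin N → (Fin 3 → ℝ))
    (hgI : ∑ i, Matrix.vecMulVec (v i) (g i) = (1 : Matrix (Fin 3) (Fin 3) ℝ))
    (w : Fin 3 → ℝ) :
    ∑ j, ∑ k, (w ⬝ᵥ crossProduct (v j) (v k)) • crossProduct (g j) (g k) = (2:ℝ) • w := by
  funext p
  have h1 : ∀ j k : Fin N,
      ((w ⬝ᵥ crossProduct (v j) (v k)) • crossProduct (g j) (g k)) p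
        = G (vecMulVec (v j) (g j)) (vecMulVec (v k) (g k)) w p := by
    intro j k
    rw [Pi.smul_apply, smul_eq_mul, G_eq]
  calc (∑ j, ∑ k, (w ⬝ᵥ crossProduct (v j) (v k)) • crossProduct (g j) (g k)) p
      = ∑ j, ∑ k, G (vecMulVec (v j) (g j)) (vecMulVec (v k) (g k)) w p := by
        rw [Finset.sum_apply]
        exact Finset.sum_congr rfl fun j _ => by
          rw [Finset.sum_apply]; exact Finset.sum_congr rfl fun k _ => h1 j k
    _ = ∑ j, G (vecMulVec (v j) (g j)) (∑ k, vecMulVec (v k) (g k)) w p := by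
        exact Finset.sum_congr rfl fun j _ => (G_sum_right _ _ _ _ _).symm
    _ = G (∑ j, vecMulVec (v j) (g j)) 1 w p := by rw [hgI, ← G_sum_left, hgI]
    _ = 2 * w p := by rw [hgI]; exact G_one_one w p
    _ = ((2:ℝ) • w) p := by simp


section Comb
variable {M : Type*} [AddCommMonoid M] {N : ℕ}

private lemma sum_ite_lt (i : Fin N) (Y : Fin N → M) :
    ∑ j, (if i < j then Y j else 0) = ∑ j ∈ Finset.Ioi i, Y j := by
  rw [← Finset.sum_filter]
  congr 1
  ext j; simp

/-- nested strict triple sum as a sum over a filtered product -/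
private lemma repr3 (H : Fin N → Fin N → Fin N → M) :
    ∑ i, ∑ j ∈ Finset.Ioi i, ∑ k ∈ Finset.Ioi j, H i j k
      = ∑ p ∈ Finset.univ.filter
          (fun p : Fin N × Fin N × Fin N => p.1 < p.2.1 ∧ p.2.1 < p.2.2),
          H p.1 p.2.1 p.2.2 := by
  rw [Finset.sum_filter, Fintype.sum_prod_type]
  refine Finset.sum_congr rfl fun i _ => ?_
  rw [Fintype.sum_prod_type]
  dsimp only
  refine Eq.symm ?_
  calc ∑ j, ∑ k, (if i < j ∧ j < k then H i j k else 0)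
      = ∑ j, (if i < j then ∑ k, (if j < k then H i j k else 0) else 0) := by
        refine Finset.sum_congr rfl fun j _ => ?_
        by_cases h : i < j <;> simp [h]
    _ = ∑ j ∈ Finset.Ioi i, ∑ k, (if j < k then H i j k else 0) := sum_ite_lt _ _
    _ = ∑ j ∈ Finset.Ioi i, ∑ k ∈ Finset.Ioi j, H i j k :=
        Finset.sum_congr rfl fun j _ => sum_ite_lt _ _

private lemma repr2 (H : Fin N → Fin N → Fin N → M) :
    ∑ a, ∑ b, ∑ c ∈ Finset.Ioi b, H a b c
      = ∑ p ∈ Finset.univ.filter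
          (fun p : Fin N × Fin N × Fin N => p.2.1 < p.2.2),
          H p.1 p.2.1 p.2.2 := by
  rw [Finset.sum_filter, Fintype.sum_prod_type]
  refine Finset.sum_congr rfl fun a _ => ?_
  rw [Fintype.sum_prod_type]
  dsimp only
  exact Finset.sum_congr rfl fun b _ => (sum_ite_lt _ _).symm

/-- union of the three regions -/
private lemma region_union :
    (Finset.univ.filter
        (fun p : Fin N × Fin N × Fin N => p.2.1 < p.2.2 ∧ p.1 ≠ p.2.1 ∧ p.1 ≠ p.2.2))
      = (Finset.univ.filter (fun p : Fin N × Fin N × Fin N => p.1 < p.2.1 ∧ p.2.1 < p.2.2))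
        ∪ (Finset.univ.filter (fun p : Fin N × Fin N × Fin N => p.2.1 < p.1 ∧ p.1 < p.2.2))
        ∪ (Finset.univ.filter (fun p : Fin N × Fin N × Fin N => p.2.1 < p.2.2 ∧ p.2.2 < p.1)) := by
  ext p
  simp only [Finset.mem_filter, Finset.mem_union, Finset.mem_univ, true_and, ne_eq,
    Fin.lt_def, Fin.ext_iff]
  omega

private lemma tri (F : Fin N → Fin N → Fin N → M)
    (hsym : ∀ a b c, F a b c = F a c b)
    (h0 : ∀ a c, F a a c = 0) (h0' : ∀ a b, F a b b = 0) :
    ∑ i, ∑ j ∈ Finset.Ioi i, ∑ k ∈ Finset.Ioi j, (F i j k + F j i k + F k i j)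
      = ∑ a, ∑ b, ∑ c ∈ Finset.Ioi b, F a b c := by
  have h0'' : ∀ a b, F a b a = 0 := fun a b => by rw [hsym]; exact h0 a b
  rw [repr3, repr2]
  rw [Finset.sum_add_distrib, Finset.sum_add_distrib]
  -- second region
  have e2 : ∑ p ∈ Finset.univ.filter
        (fun p : Fin N × Fin N × Fin N => p.1 < p.2.1 ∧ p.2.1 < p.2.2), F p.2.1 p.1 p.2.2
      = ∑ p ∈ Finset.univ.filter
        (fun p : Fin N × Fin N × Fin N => p.2.1 < p.1 ∧ p.1 < p.2.2), F p.1 p.2.1 p.2.2 := by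
    refine Finset.sum_nbij' (fun p => (p.2.1, p.1, p.2.2)) (fun p => (p.2.1, p.1, p.2.2))
      ?_ ?_ ?_ ?_ ?_ <;> simp
  have e3 : ∑ p ∈ Finset.univ.filter
        (fun p : Fin N × Fin N × Fin N => p.1 < p.2.1 ∧ p.2.1 < p.2.2), F p.2.2 p.1 p.2.1
      = ∑ p ∈ Finset.univ.filter
        (fun p : Fin N × Fin N × Fin N => p.2.1 < p.2.2 ∧ p.2.2 < p.1), F p.1 p.2.1 p.2.2 := by
    refine Finset.sum_nbij' (fun p => (p.2.2, p.1, p.2.1)) (fun p => (p.2.1, p.2.2, p.1))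
      ?_ ?_ ?_ ?_ ?_ <;> simp
  rw [e2, e3]
  -- RHS: restrict by the ≠ conditions
  have eR : ∑ p ∈ Finset.univ.filter
        (fun p : Fin N × Fin N × Fin N => p.2.1 < p.2.2 ∧ p.1 ≠ p.2.1 ∧ p.1 ≠ p.2.2),
        F p.1 p.2.1 p.2.2
      = ∑ p ∈ Finset.univ.filter
        (fun p : Fin N × Fin N × Fin N => p.2.1 < p.2.2), F p.1 p.2.1 p.2.2 := by
    refine Finset.sum_subset ?_ ?_
    · intro p hp
      simp only [Finset.mem_filter, Finset.mem_univ, true_and] at hp ⊢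
      exact hp.1
    · intro p hp hnp
      simp only [Finset.mem_filter, Finset.mem_univ, true_and, not_and, ne_eq, not_not] at hp hnp
      rcases em (p.1 = p.2.1) with h | h
      · rw [h]; exact h0 _ _
      · rw [hnp hp h]; exact h0'' _ _
  rw [← eR, region_union, Finset.sum_union, Finset.sum_union]
  · have d12 : Disjoint
        (Finset.univ.filter (fun p : Fin N × Fin N × Fin N => p.1 < p.2.1 ∧ p.2.1 < p.2.2))
        (Finset.univ.filter (fun p : Fin N × Fin N × Fin N => p.2.1 < p.1 ∧ p.1 < p.2.2)) := by
      rw [Finset.disjoint_left]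
      intro p h1 h2
      simp only [Finset.mem_filter, Fin.lt_def] at h1 h2
      omega
    exact d12
  · rw [Finset.disjoint_left]
    intro p h1 h2
    simp only [Finset.mem_union, Finset.mem_filter, Fin.lt_def] at h1 h2
    omega

private lemma pair (f : Fin N → Fin N → M) (hsymm : ∀ j k, f j k = f k j)
    (hdiag : ∀ j, f j j = 0) :
    ∑ j, ∑ k, f j k = 2 • ∑ j, ∑ k ∈ Finset.Ioi j, f j k := by
  have split : ∀ j, (∑ k, f j k)
      = ∑ k ∈ Finset.Iio j, f j k + ∑ k ∈ Finset.Ioi j, f j k := by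
    intro j
    have hu : Finset.Iio j ∪ Finset.Ioi j = ({j} : Finset (Fin N))ᶜ := by
      ext k
      simp only [Finset.mem_union, Finset.mem_Iio, Finset.mem_Ioi, Finset.mem_compl,
        Finset.mem_singleton, Fin.lt_def, Fin.ext_iff]
      omega
    have : ∑ k, f j k = ∑ k ∈ ({j} : Finset (Fin N))ᶜ, f j k := by
      rw [← Finset.sum_compl_add_sum ({j} : Finset (Fin N))]
      simp [hdiag]
    rw [this, ← hu, Finset.sum_union]
    rw [Finset.disjoint_left]
    intro k h1 h2
    simp only [Finset.mem_Iio, Finset.mem_Ioi, Fin.lt_def] at h1 h2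
    omega
  have swap : ∑ j, ∑ k ∈ Finset.Iio j, f j k = ∑ j, ∑ k ∈ Finset.Ioi j, f j k := by
    rw [Finset.sum_sigma', Finset.sum_sigma']
    refine Finset.sum_nbij' (fun p => ⟨p.2, p.1⟩) (fun p => ⟨p.2, p.1⟩)
      ?_ ?_ ?_ ?_ (fun a _ => hsymm a.1 a.2) <;> simp
  calc ∑ j, ∑ k, f j k
      = ∑ j, (∑ k ∈ Finset.Iio j, f j k + ∑ k ∈ Finset.Ioi j, f j k) :=
        Finset.sum_congr rfl fun j _ => split j
    _ = ∑ j, ∑ k ∈ Finset.Iio j, f j k + ∑ j, ∑ k ∈ Finset.Ioi j, f j k :=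
        Finset.sum_add_distrib
    _ = 2 • ∑ j, ∑ k ∈ Finset.Ioi j, f j k := by rw [swap, two_smul]

end Comb


/-- For generalized barycentric coordinates `{λ_i}` on a convex polyhedron `m ⊆ ℝ³`,
`Σ_{i<j<k} (v_i · (v_j × v_k)) W_{ijk} = x` holds pointwise, where
`W_{ijk} = λ_i(∇λ_j × ∇λ_k) + λ_j(∇λ_k × ∇λ_i) + λ_k(∇λ_i × ∇λ_j)`. -/
theorem whitney_two_forms_reproduce_position
    {N : ℕ} (v : Fin N → (Fin 3 → ℝ)) (x : Fin 3 → ℝ)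
    (l : Fin N → ℝ) (g : Fin N → (Fin 3 → ℝ))
    (hsum : ∑ i, l i = 1)
    (hlin : ∑ i, l i • v i = x)
    (hgsum : ∑ i, g i = 0)
    (hgI : ∑ i, Matrix.vecMulVec (v i) (g i) = (1 : Matrix (Fin 3) (Fin 3) ℝ)) :
    ∑ i, ∑ j ∈ Finset.Ioi i, ∑ k ∈ Finset.Ioi j,
        (v i ⬝ᵥ crossProduct (v j) (v k)) •
          (l i • crossProduct (g j) (g k) + l j • crossProduct (g k) (g i)
            + l k • crossProduct (g i) (g j))
      = x := by
  have key := key v g hgI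
  have tri := fun (F : Fin N → Fin N → Fin N → (Fin 3 → ℝ)) => tri F
  have pair := fun (f : Fin N → Fin N → (Fin 3 → ℝ)) => pair f

  set F : Fin N → Fin N → Fin N → (Fin 3 → ℝ) :=
    fun a b c => (l a * (v a ⬝ᵥ crossProduct (v b) (v c))) • crossProduct (g b) (g c) with hF
  have hanti : ∀ y z : Fin 3 → ℝ, crossProduct y z = -crossProduct z y := by
    intro y z
    rw [← cross_anticomm]
  have hFsym : ∀ a b c, F a b c = F a c b := by
    intro a b c
    rw [hF]
    dsimp only
    rw [hanti (v c) (v b), hanti (g c) (g b), dotProduct_neg]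
    module
  have hF0 : ∀ a c, F a a c = 0 := by
    intro a c
    rw [hF]; dsimp only
    rw [dot_self_cross, mul_zero, zero_smul]
  have hF0' : ∀ a b, F a b b = 0 := by
    intro a b
    rw [hF]; dsimp only
    rw [cross_self (g b), smul_zero]
  have hsummand : ∀ i j k : Fin N,
      (v i ⬝ᵥ crossProduct (v j) (v k)) •
          (l i • crossProduct (g j) (g k) + l j • crossProduct (g k) (g i)
            + l k • crossProduct (g i) (g j))
        = F i j k + F j i k + F k i j := by
    intro i j k
    rw [hF]; dsimp only
    have e1 : v j ⬝ᵥ crossProduct (v i) (v k) = -(v i ⬝ᵥ crossProduct (v j) (v k)) := by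
      rw [triple_product_permutation (v j) (v i) (v k), hanti (v k) (v j), dotProduct_neg]
    have e2 : v k ⬝ᵥ crossProduct (v i) (v j) = v i ⬝ᵥ crossProduct (v j) (v k) :=
      triple_product_permutation (v k) (v i) (v j)
    rw [e1, e2, hanti (g i) (g k)]
    module
  calc ∑ i, ∑ j ∈ Finset.Ioi i, ∑ k ∈ Finset.Ioi j,
        (v i ⬝ᵥ crossProduct (v j) (v k)) •
          (l i • crossProduct (g j) (g k) + l j • crossProduct (g k) (g i)
            + l k • crossProduct (g i) (g j))
      = ∑ i, ∑ j ∈ Finset.Ioi i, ∑ k ∈ Finset.Ioi j, (F i j k + F j i k + F k i j) := by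
        refine Finset.sum_congr rfl fun i _ => Finset.sum_congr rfl fun j _ =>
          Finset.sum_congr rfl fun k _ => hsummand i j k
    _ = ∑ a, ∑ b, ∑ c ∈ Finset.Ioi b, F a b c := tri F hFsym hF0 hF0'
    _ = ∑ a, l a • v a := by
        refine Finset.sum_congr rfl fun a _ => ?_
        have hp := pair (fun b c => F a b c) (fun b c => by
            show F a b c = F a c b; exact hFsym a b c)
          (fun b => hF0' a b)
        have hfull : ∑ b, ∑ c, F a b c = l a • ((2:ℝ) • v a) := by
          have : ∀ b c : Fin N, F a b c
              = l a • ((v a ⬝ᵥ crossProduct (v b) (v c)) • crossProduct (g b) (g c)) := by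
            intro b c; rw [hF]; dsimp only; module
          calc ∑ b, ∑ c, F a b c
              = ∑ b, ∑ c, l a • ((v a ⬝ᵥ crossProduct (v b) (v c)) • crossProduct (g b) (g c)) :=
                Finset.sum_congr rfl fun b _ => Finset.sum_congr rfl fun c _ => this b c
            _ = l a • ∑ b, ∑ c, (v a ⬝ᵥ crossProduct (v b) (v c)) • crossProduct (g b) (g c) := by
                rw [Finset.smul_sum]
                exact Finset.sum_congr rfl fun b _ => (Finset.smul_sum).symm
            _ = l a • ((2:ℝ) • v a) := by rw [key (v a)]
        have h2 : (2:ℝ) • (∑ b, ∑ c ∈ Finset.Ioi b, F a b c) = (2:ℝ) • (l a • v a) := by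
          have hn : (2:ℝ) • (∑ b, ∑ c ∈ Finset.Ioi b, F a b c)
              = 2 • (∑ b, ∑ c ∈ Finset.Ioi b, F a b c) := by
            rw [two_smul, two_nsmul]
          rw [hn, ← hp, hfull]
          module
        exact smul_right_injective (Fin 3 → ℝ) two_ne_zero h2
    _ = x := hlin
end

section
/- Let {g_j} and {w_j} be finite families of vectors in R^3 with Σ_j w_j g_j^T = I (the 3×3 identity). Then Σ_{j,k} (g_j × g_k)(w_j × w_k)^T = 2I. -/
open Matrix BigOperators

/-- Let `{g_j}` and `{w_j}` be finite families of vectors in `ℝ³` with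
`Σ_j w_j g_jᵀ = I`.  Then `Σ_{j,k} (g_j × g_k)(w_j × w_k)ᵀ = 2I`. -/
theorem cross_product_contraction_identity
    {K : Type} [Fintype K] (g w : K → (Fin 3 → ℝ))
    (h : ∑ j, Matrix.vecMulVec (w j) (g j) = (1 : Matrix (Fin 3) (Fin 3) ℝ)) :
    ∑ j, ∑ k, Matrix.vecMulVec (crossProduct (g j) (g k)) (crossProduct (w j) (w k))
      = (2 : ℝ) • (1 : Matrix (Fin 3) (Fin 3) ℝ) := by
  have key : ∀ p a : Fin 3, ∑ j, w j p * g j a = if p = a then (1:ℝ) else 0 := by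
    intro p a
    have := congrFun (congrFun h p) a
    simpa [Matrix.sum_apply, Matrix.vecMulVec_apply, Matrix.one_apply] using this
  have step : ∀ (a b p q : Fin 3),
      (∑ j, ∑ k, (g j a * w j p) * (g k b * w k q))
        = (if p = a then (1:ℝ) else 0) * (if q = b then 1 else 0) := by
    intro a b p q
    rw [← key p a, ← key q b, Finset.sum_mul_sum]
    exact Finset.sum_congr rfl fun j _ => Finset.sum_congr rfl fun k _ => by ring
  have master : ∀ a b p q : Fin 3,
      (∑ j, ∑ k, (g j a * g k b - g j b * g k a) * (w j p * w k q - w j q * w k p))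
        = (if p = a then (1:ℝ) else 0) * (if q = b then 1 else 0)
          - (if q = a then (1:ℝ) else 0) * (if p = b then 1 else 0)
          - (if p = b then (1:ℝ) else 0) * (if q = a then 1 else 0)
          + (if q = b then (1:ℝ) else 0) * (if p = a then 1 else 0) := by
    intro a b p q
    have expand : ∀ j k : K,
        (g j a * g k b - g j b * g k a) * (w j p * w k q - w j q * w k p)
          = (g j a * w j p) * (g k b * w k q) - (g j a * w j q) * (g k b * w k p)
            - (g j b * w j p) * (g k a * w k q) + (g j b * w j q) * (g k a * w k p) :=
      fun j k => by ring
    simp_rw [expand, Finset.sum_add_distrib, Finset.sum_sub_distrib]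
    rw [step a b p q, step a b q p, step b a p q, step b a q p]
  ext r c
  simp only [Matrix.sum_apply, Matrix.vecMulVec_apply, Matrix.smul_apply, Matrix.one_apply,
    smul_eq_mul]
  fin_cases r <;> fin_cases c <;>
    simp only [crossProduct, LinearMap.mk₂_apply, Matrix.cons_val_zero, Matrix.cons_val_one,
      Matrix.head_cons, Matrix.cons_val_two, Matrix.tail_cons, Fin.isValue, Fin.zero_eta,
      Fin.mk_one, show (⟨2, by omega⟩ : Fin 3) = 2 from rfl]
  · rw [master 1 2 1 2]; norm_num [Fin.ext_iff]
  · rw [master 1 2 2 0]; norm_num [Fin.ext_iff]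
  · rw [master 1 2 0 1]; norm_num [Fin.ext_iff]
  · rw [master 2 0 1 2]; norm_num [Fin.ext_iff]
  · rw [master 2 0 2 0]; norm_num [Fin.ext_iff]
  · rw [master 2 0 0 1]; norm_num [Fin.ext_iff]
  · rw [master 0 1 1 2]; norm_num [Fin.ext_iff]
  · rw [master 0 1 2 0]; norm_num [Fin.ext_iff]
  · rw [master 0 1 0 1]; norm_num [Fin.ext_iff]
end
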